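/- arXiv:math/9507206 — 11 statements merged into one kernel-verified Lean document; each statement's English description precedes it below -/
import Mathlib

section
/- Let α and β be n-cycles in the symmetric group S_{n+1}. Then there exists a natural number d with 1 ≤ d ≤ n−1 such that α·β^d is not an n-cycle. -/
/-!
Suppose `α * β ^ d` were an `n`-cycle for every `d < n`. Each of them fixes exactly one point,
so there are `n` pairs `(d, x)` with `d < n` and `(α * β ^ d) x = x`. Count these pairs by `x`
instead, i.e. count the `d < n` with `(β ^ d) x = α⁻¹ x`. Since `β` cycles its support
transitively with period `n`, a point `x` with `x` and `α⁻¹ x` both moved by `β` contributes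
exactly one `d`; the fixed point `b` of `β` contributes `n` if `α b = b` and nothing otherwise.
The total is `2n` if `α b = b` and `n - 1` otherwise, never `n`.
-/

/-- An `n`-cycle in `S_{n+1}`: a cyclic permutation whose support has `n` points. -/
def IsNCycle {m : ℕ} (σ : Equiv.Perm (Fin m)) (n : ℕ) : Prop :=
  σ.IsCycle ∧ σ.support.card = n

open Finset

namespace Equiv.Perm

variable {α : Type*} [DecidableEq α]

theorem IsCycleOn.card_filter_pow_apply_eq {f : Perm α} {s : Finset α} (hf : f.IsCycleOn s)
    {a b : α} (ha : a ∈ s) (hb : b ∈ s) : #{n ∈ range #s | (f ^ n) a = b} = 1 := by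
  obtain ⟨m, hm, rfl⟩ := hf.exists_pow_eq ha hb
  rw [card_eq_one]
  refine ⟨m, Finset.ext fun n => ?_⟩
  simp only [mem_filter, mem_range, mem_singleton, hf.pow_apply_eq_pow_apply ha]
  exact ⟨fun ⟨hn, h⟩ => h.eq_of_lt_of_lt hn hm, by rintro rfl; exact ⟨hm, rfl⟩⟩

variable [Fintype α]

theorem card_filter_apply_eq_self (σ : Perm α) :
    #{x | σ x = x} = Fintype.card α - #σ.support := by
  rw [← card_compl]
  congr 1
  ext x
  simp

theorem IsCycle.card_filter_pow_apply_eq {f : Perm α} (hf : f.IsCycle) (x y : α) :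
    #{n ∈ range #f.support | (f ^ n) x = y} =
      (if x ∈ f.support ∧ y ∈ f.support then 1 else 0) +
        #f.support * if x ∉ f.support ∧ x = y then 1 else 0 := by
  by_cases hx : x ∈ f.support
  · by_cases hy : y ∈ f.support
    · have hcyc : f.IsCycleOn f.support := by
        simpa [coe_support_eq_set_support] using hf.isCycleOn
      simp [hx, hy, hcyc.card_filter_pow_apply_eq hx hy]
    · rw [filter_false_of_mem fun n _ (h : (f ^ n) x = y) => hy (h ▸ pow_apply_mem_support.2 hx)]
      simp [hx, hy]
  · simp only [pow_apply_eq_self_of_apply_eq_self (notMem_support.1 hx)]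
    obtain rfl | hxy := eq_or_ne x y
    · simp [notMem_support.1 hx]
    · simp [hx, hxy]

theorem IsCycle.sum_card_filter_mul_pow_apply_eq_self {f : Perm α} (hf : f.IsCycle) (g : Perm α) :
    ∑ d ∈ range #f.support, #{x | (g * f ^ d) x = x} =
      #{x | x ∈ f.support ∧ g⁻¹ x ∈ f.support} + #f.support * #{x | x ∉ f.support ∧ g x = x} := by
  have hswap : ∑ d ∈ range #f.support, #{x | (g * f ^ d) x = x} =
      ∑ x, #{d ∈ range #f.support | (f ^ d) x = g⁻¹ x} := by
    simp only [card_filter, mul_apply, ← eq_inv_iff_eq]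
    exact Finset.sum_comm
  rw [hswap, sum_congr rfl fun x _ => hf.card_filter_pow_apply_eq x (g⁻¹ x), sum_add_distrib,
    ← mul_sum, card_filter, card_filter]
  simp only [eq_inv_iff_eq]

end Equiv.Perm

open Equiv Perm

theorem IsNCycle.card_filter_apply_eq_self {n : ℕ} {σ : Perm (Fin (n + 1))} (hσ : IsNCycle σ n) :
    #{x | σ x = x} = 1 := by
  rw [Perm.card_filter_apply_eq_self, hσ.2]
  simp

theorem IsNCycle.exists_support_eq_compl_singleton {n : ℕ} {σ : Perm (Fin (n + 1))}
    (hσ : IsNCycle σ n) : ∃ b, σ.support = {b}ᶜ := by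
  obtain ⟨b, hb⟩ := card_eq_one.1 hσ.card_filter_apply_eq_self
  refine ⟨b, ?_⟩
  rw [← hb]
  ext x
  simp

theorem IsNCycle.sum_card_filter_mul_pow_apply_eq_self_ne {n : ℕ} {β : Perm (Fin (n + 1))}
    (hβ : IsNCycle β n) (α : Perm (Fin (n + 1))) :
    ∑ d ∈ range n, #{x | (α * β ^ d) x = x} ≠ n := by
  obtain ⟨b, hb⟩ := hβ.exists_support_eq_compl_singleton
  have hn : 2 ≤ n := hβ.2 ▸ hβ.1.two_le_card_support
  have hsum := hβ.1.sum_card_filter_mul_pow_apply_eq_self α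
  rw [hβ.2] at hsum
  rw [hsum, hb]
  have hmoved : #{x | x ∈ ({b}ᶜ : Finset _) ∧ α⁻¹ x ∈ ({b}ᶜ : Finset _)} = n + 1 - #{b, α b} := by
    have hset : ({x | x ∈ ({b}ᶜ : Finset _) ∧ α⁻¹ x ∈ ({b}ᶜ : Finset _)} : Finset _) =
        {b, α b}ᶜ := by
      ext x
      simp only [mem_filter, mem_univ, mem_compl, mem_singleton, mem_insert, inv_eq_iff_eq, not_or,
        true_and]
    rw [hset, card_compl, Fintype.card_fin]
  have hfixed : #{x | x ∉ ({b}ᶜ : Finset _) ∧ α x = x} = if α b = b then 1 else 0 := by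
    split_ifs with hαb
    · exact card_eq_one.2 ⟨b, by ext x; aesop⟩
    · simp [hαb]
  rw [hmoved, hfixed]
  by_cases hαb : α b = b
  · simp [hαb]
    omega
  · rw [card_pair (Ne.symm hαb), if_neg hαb]
    omega

theorem stmt_0 (n : ℕ) (α β : Equiv.Perm (Fin (n + 1)))
    (hα : IsNCycle α n) (hβ : IsNCycle β n) :
    ∃ d : ℕ, 1 ≤ d ∧ d ≤ n - 1 ∧ ¬ IsNCycle (α * β ^ d) n := by
  by_contra! hcon
  have hone : ∀ d ∈ range n, #{x | (α * β ^ d) x = x} = 1 := by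
    intro d hd
    rcases d.eq_zero_or_pos with rfl | hd0
    · simpa using hα.card_filter_apply_eq_self
    · exact (hcon d hd0 (by rw [mem_range] at hd; omega)).card_filter_apply_eq_self
  apply hβ.sum_card_filter_mul_pow_apply_eq_self_ne α
  rw [sum_congr rfl hone, sum_const, card_range, smul_eq_mul, mul_one]
end

section
/- Every group of order 24 that contains no element of order 6 is isomorphic to the symmetric group S_4. -/
open MulAction Subgroup

set_option linter.unusedSectionVars false

section Aux
variable {G : Type*} [Group G] [Fintype G]

private lemma aux_no_comm (h6 : ∀ g : G, orderOf g ≠ 6) {x y : G} (hx : orderOf x = 3)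
    (hy : orderOf y = 2) (hc : Commute x y) : False :=
  h6 (x * y) (by
    rw [hc.orderOf_mul_eq_mul_orderOf_of_coprime (by rw [hx, hy]; norm_num), hx, hy])

private lemma orderOf_conj' {H : Type*} [Group H] (g x : H) :
    orderOf (g * x * g⁻¹) = orderOf x := by
  simpa [MulAut.conj_apply] using MulEquiv.orderOf_eq (MulAut.conj g) x

private lemma sylow_card_three (hcard : Fintype.card G = 24) (P : Sylow 3 G) :
    Nat.card (P : Subgroup G) = 3 := by
  haveI : Fact (Nat.Prime 3) := ⟨by norm_num⟩
  rw [Sylow.card_eq_multiplicity, Nat.card_eq_fintype_card, hcard]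
  have h24 : (24 : ℕ).factorization 3 = 1 := by
    rw [show (24 : ℕ) = 2 ^ 3 * 3 by norm_num,
      Nat.factorization_mul (by norm_num) (by norm_num), Nat.factorization_pow,
      Nat.Prime.factorization (by norm_num : Nat.Prime 2),
      Nat.Prime.factorization (by norm_num : Nat.Prime 3)]
    simp
  rw [h24, pow_one]

private lemma mem_sylow_of_order_three (hcard : Fintype.card G = 24) {x : G}
    (hx : orderOf x = 3) (P : Sylow 3 G) (hxP : x ∈ (P : Subgroup G)) :
    (P : Subgroup G) = zpowers x := by
  have h1 : zpowers x ≤ (P : Subgroup G) := zpowers_le.mpr hxP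
  have h2 : Nat.card (zpowers x) = 3 := by rw [Nat.card_zpowers, hx]
  exact (Subgroup.eq_of_le_of_card_ge h1 (by rw [h2, sylow_card_three hcard P])).symm

private lemma mem_of_normalizes (hcard : Fintype.card G = 24) {x : G} (hx : orderOf x = 3)
    (P : Sylow 3 G) (hn : x ∈ normalizer (P : Set G)) : x ∈ (P : Subgroup G) := by
  haveI : Fact (Nat.Prime 3) := ⟨by norm_num⟩
  have hpg : IsPGroup 3 (zpowers x) := IsPGroup.of_card (by rw [Nat.card_zpowers, hx, pow_one])
  have h := hpg.inf_normalizer_sylow P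
  rw [inf_eq_left.mpr (zpowers_le.mpr hn)] at h
  exact (h.le.trans inf_le_right) (mem_zpowers x)

private lemma sylow_count (hcard : Fintype.card G = 24) (h6 : ∀ g : G, orderOf g ≠ 6) :
    Nat.card (Sylow 3 G) = 4 := by
  haveI : Fact (Nat.Prime 3) := ⟨by norm_num⟩
  obtain ⟨x, hx⟩ := exists_prime_orderOf_dvd_card 3 (by rw [hcard]; norm_num)
  set n := Nat.card (Sylow 3 G) with hn
  have hdvd : n ∣ ((default : Sylow 3 G) : Subgroup G).index := Sylow.card_dvd_index _
  have hidx : ((default : Sylow 3 G) : Subgroup G).index = 8 := by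
    have h := Subgroup.card_mul_index ((default : Sylow 3 G) : Subgroup G)
    rw [sylow_card_three hcard, Nat.card_eq_fintype_card, hcard] at h
    omega
  rw [hidx] at hdvd
  have hmod : n % 3 = 1 % 3 := card_sylow_modEq_one 3 G
  have hpos : 0 < n := Nat.card_pos
  have hle : n ≤ 8 := Nat.le_of_dvd (by norm_num) hdvd
  have hne1 : n ≠ 1 := by
    intro h1
    haveI hsub : Subsingleton (Sylow 3 G) := (Nat.card_eq_one_iff_unique.mp (hn ▸ h1)).1
    have hpg : IsPGroup 3 (zpowers x) := IsPGroup.of_card (by rw [Nat.card_zpowers, hx, pow_one])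
    obtain ⟨Q, hQ⟩ := hpg.exists_le_sylow
    have hQx : (Q : Subgroup G) = zpowers x :=
      mem_sylow_of_order_three hcard hx Q (hQ (mem_zpowers x))
    have hx3 : x ^ (3 : ℤ) = 1 := by
      have h := pow_orderOf_eq_one x
      rw [hx] at h
      rw [show (3 : ℤ) = ((3 : ℕ) : ℤ) by norm_num, zpow_natCast, h]
    have hsubS : orbit (ConjAct G) x ⊆ ({x, x * x} : Set G) := by
      rintro y ⟨g, rfl⟩
      have hy3 : orderOf (g • x) = 3 := by rw [ConjAct.smul_def, orderOf_conj', hx]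
      have hpg' : IsPGroup 3 (zpowers (g • x)) :=
        IsPGroup.of_card (by rw [Nat.card_zpowers, hy3, pow_one])
      obtain ⟨Q', hQ'⟩ := hpg'.exists_le_sylow
      have hmem : g • x ∈ zpowers x := by
        rw [← hQx, ← (Subsingleton.elim Q' Q)]
        exact hQ' (mem_zpowers _)
      obtain ⟨m, hm⟩ := Subgroup.mem_zpowers_iff.mp hmem
      have heq : g • x = x ^ (m % 3) := by
        conv_lhs => rw [← hm, ← Int.mul_ediv_add_emod m 3]
        rw [zpow_add, zpow_mul, hx3, one_zpow, one_mul]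
      have hne : g • x ≠ 1 := by
        intro h; rw [h, orderOf_one] at hy3; norm_num at hy3
      have hm3 : m % 3 = 0 ∨ m % 3 = 1 ∨ m % 3 = 2 := by omega
      rcases hm3 with h | h | h <;> rw [h] at heq
      · exact absurd (heq.trans (zpow_zero x)) hne
      · rw [zpow_one] at heq
        exact Or.inl heq
      · rw [show (2 : ℤ) = 1 + 1 by norm_num, zpow_add, zpow_one] at heq
        exact Or.inr heq
    have hcardS : Nat.card (orbit (ConjAct G) x) ≤ 2 := by
      rw [Nat.card_coe_set_eq]
      exact (Set.ncard_le_ncard hsubS (Set.toFinite _)).trans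
        ((Set.ncard_insert_le _ _).trans (by simp))
    haveI : Fintype (ConjAct G) := Fintype.ofFinite _
    haveI := Fintype.ofFinite (orbit (ConjAct G) x)
    haveI := Fintype.ofFinite (stabilizer (ConjAct G) x)
    have horb := card_orbit_mul_card_stabilizer_eq_card_group (ConjAct G) x
    rw [← Nat.card_eq_fintype_card, ← Nat.card_eq_fintype_card, ← Nat.card_eq_fintype_card] at horb
    have hCG : Nat.card (ConjAct G) = 24 := by
      rw [Nat.card_congr ConjAct.ofConjAct.toEquiv, Nat.card_eq_fintype_card, hcard]
    rw [hCG] at horb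
    have hposS : 0 < Nat.card (orbit (ConjAct G) x) :=
      Nat.card_pos_iff.mpr ⟨⟨x, mem_orbit_self x⟩, inferInstance⟩
    have h2 : 2 ∣ Nat.card (stabilizer (ConjAct G) x) := by
      set a := Nat.card (orbit (ConjAct G) x)
      interval_cases a <;> omega
    obtain ⟨y, hy⟩ := exists_prime_orderOf_dvd_card' 2 h2
    set z := ConjAct.ofConjAct (y : ConjAct G) with hz
    have hzo : orderOf z = 2 := by
      rw [hz, MulEquiv.orderOf_eq, Subgroup.orderOf_coe, hy]
    have hyx : (y : ConjAct G) • x = x := y.2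
    rw [ConjAct.smul_def] at hyx
    exact aux_no_comm h6 hx hzo ((mul_inv_eq_iff_eq_mul.mp hyx).symm)
  interval_cases n <;> omega

private def permMulEquiv {α β : Type*} (e : α ≃ β) : Equiv.Perm α ≃* Equiv.Perm β where
  toEquiv := e.permCongr
  map_mul' a b := Equiv.ext fun xx => by
    simp [Equiv.permCongr_apply, Equiv.Perm.mul_apply]

end Aux

theorem stmt_1 (G : Type*) [Group G] [Fintype G] (hcard : Fintype.card G = 24)
    (h6 : ∀ g : G, orderOf g ≠ 6) :
    Nonempty (G ≃* Equiv.Perm (Fin 4)) := by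
  haveI : Fact (Nat.Prime 3) := ⟨by norm_num⟩
  have hn4 := sylow_count hcard h6
  set φ := MulAction.toPermHom G (Sylow 3 G) with hφ
  have hker : ∀ g ∈ φ.ker, ∀ P : Sylow 3 G, g ∈ normalizer (P : Set G) := by
    intro g hg P
    rw [← Sylow.smul_eq_iff_mem_normalizer]
    have h1 : φ g = 1 := hg
    show (φ g) P = P
    rw [h1]; rfl
  obtain ⟨P0⟩ : Nonempty (Sylow 3 G) := inferInstance
  have hKdvd : Nat.card φ.ker ∣ 6 := by
    have hN : Nat.card (normalizer (P0 : Set G)) = 6 := by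
      have h1 : (normalizer (P0 : Set G)).index = 4 := by
        rw [← Sylow.card_eq_index_normalizer, hn4]
      have h := Subgroup.card_mul_index (normalizer (P0 : Set G))
      rw [h1, Nat.card_eq_fintype_card (α := G), hcard] at h
      omega
    rw [← hN]
    exact Subgroup.card_dvd_of_le (fun g hg => hker g hg P0)
  have hK3 : ¬ (3 ∣ Nat.card φ.ker) := by
    intro h3
    obtain ⟨y, hy⟩ := exists_prime_orderOf_dvd_card' 3 h3
    have hyG : orderOf (y : G) = 3 := (Subgroup.orderOf_coe y).trans hy
    have hmem : ∀ P : Sylow 3 G, ((y : G) ∈ (P : Subgroup G)) := fun P =>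
      mem_of_normalizes hcard hyG P (hker _ y.2 P)
    have hnt : Nontrivial (Sylow 3 G) := by
      rw [← Finite.one_lt_card_iff_nontrivial]; omega
    obtain ⟨P, Q, hPQ⟩ := hnt
    exact hPQ (Sylow.ext (by rw [mem_sylow_of_order_three hcard hyG P (hmem P),
      mem_sylow_of_order_three hcard hyG Q (hmem Q)]))
  have hK1 : Nat.card φ.ker = 1 := by
    by_contra hne
    have hKle : Nat.card φ.ker ≤ 6 := Nat.le_of_dvd (by norm_num) hKdvd
    have hKpos : 0 < Nat.card φ.ker := Nat.card_pos
    have h2 : Nat.card φ.ker = 2 := by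
      set c := Nat.card φ.ker
      interval_cases c <;> omega
    obtain ⟨k, hk⟩ := exists_prime_orderOf_dvd_card' 2 (by rw [h2])
    have hkG : orderOf (k : G) = 2 := (Subgroup.orderOf_coe k).trans hk
    have hker_eq : φ.ker = zpowers (k : G) :=
      (Subgroup.eq_of_le_of_card_ge (zpowers_le.mpr k.2)
        (by rw [Nat.card_zpowers, hkG, h2])).symm
    obtain ⟨x, hx⟩ := exists_prime_orderOf_dvd_card 3 (by rw [hcard]; norm_num)
    have hconj : x * (k : G) * x⁻¹ ∈ φ.ker := (MonoidHom.normal_ker φ).conj_mem (k : G) k.2 x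
    obtain ⟨m, hm⟩ := Subgroup.mem_zpowers_iff.mp (hker_eq.le hconj)
    have hk2 : (k : G) ^ (2 : ℤ) = 1 := by
      have h := pow_orderOf_eq_one (k : G)
      rw [hkG] at h
      rw [show (2 : ℤ) = ((2 : ℕ) : ℤ) by norm_num, zpow_natCast, h]
    have heq : x * (k : G) * x⁻¹ = (k : G) ^ (m % 2) := by
      conv_lhs => rw [← hm, ← Int.mul_ediv_add_emod m 2]
      rw [zpow_add, zpow_mul, hk2, one_zpow, one_mul]
    have hne1 : x * (k : G) * x⁻¹ ≠ 1 := by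
      intro h
      have := orderOf_conj' x (k : G)
      rw [h, orderOf_one, hkG] at this
      norm_num at this
    have hm2 : m % 2 = 0 ∨ m % 2 = 1 := by omega
    rcases hm2 with h | h <;> rw [h] at heq
    · exact hne1 (heq.trans (zpow_zero _))
    · rw [zpow_one] at heq
      exact aux_no_comm h6 hx hkG (mul_inv_eq_iff_eq_mul.mp heq)
  have hinj : Function.Injective φ := by
    rw [← MonoidHom.ker_eq_bot_iff]
    exact Subgroup.card_eq_one.mp hK1
  haveI := Classical.typeDecidableEq (Sylow 3 G)
  haveI : Fintype (Sylow 3 G) := Fintype.ofFinite _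
  have hcard4 : Fintype.card (Sylow 3 G) = 4 := by rw [← Nat.card_eq_fintype_card, hn4]
  have hbij : Function.Bijective φ :=
    (Fintype.bijective_iff_injective_and_card φ).mpr
      ⟨hinj, by rw [Fintype.card_perm, hcard4, hcard]; decide⟩
  exact ⟨(MulEquiv.ofBijective φ hbij).trans
    (permMulEquiv (Fintype.equivFinOfCardEq hcard4))⟩
end

section
/- For all x₁, x₂ in the alternating group A_5, at least one of the following holds: x₁^10 = 1, x₂^10 = 1, x₁ = x₂, (x₁x₂)^10 = 1, or (x₁²x₂)² = 1. -/
/-!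
Every element of `A₅` has order `1`, `2`, `3` or `5`, so in a counterexample `x₁`, `x₂` and `x₁ x₂`
are all `3`-cycles. All `3`-cycles are conjugate in `A₅`, so we may take `x₁ = (0 1 2)`, and the
remaining check over `x₂` is finite. Conceptually: if the supports of `x₁` and `x₂` meet in one point,
`x₁ x₂` is a `5`-cycle, and if they coincide, `x₂ = x₁^{±1}`. Otherwise `x₁` and `x₂` lie in a copy of
`A₄`; as `x₁ x₂` has order `3`, they have the same image in `A₄ / V₄ ≅ C₃`, so `x₁⁻¹ x₂ = x₁² x₂`
lies in the Klein four-group `V₄`.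
-/

open Equiv Equiv.Perm

theorem Equiv.Perm.isThreeCycle_of_pow_three_eq_one {α : Type*} [Fintype α] [DecidableEq α]
    (hα : Fintype.card α < 6) {g : Perm α} (h3 : g ^ 3 = 1) (h1 : g ≠ 1) : IsThreeCycle g := by
  have hord : orderOf g = 3 := orderOf_eq_prime h3 h1
  obtain ⟨n, hn⟩ := cycleType_prime_order (hord ▸ Nat.prime_three)
  have hsum := (sum_cycleType g).trans_le (Finset.card_le_univ _)
  simp only [hn, hord, Multiset.sum_replicate, smul_eq_mul] at hsum
  obtain rfl : n = 0 := by omega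
  rw [IsThreeCycle, hn, hord]
  rfl

set_option maxRecDepth 10000 in
theorem alternatingGroup.pow_ten_eq_one_or_pow_three_eq_one (g : alternatingGroup (Fin 5)) :
    g ^ 10 = 1 ∨ g ^ 3 = 1 := by
  revert g
  decide

def cycle012 : alternatingGroup (Fin 5) :=
  ⟨Fin.cycleRange 2, Fin.isThreeCycle_cycleRange_two.mem_alternatingGroup⟩

set_option maxRecDepth 10000 in
theorem cycle012_eq_or_sq_mul_sq_eq_one (y : alternatingGroup (Fin 5)) (hy : y ^ 3 = 1)
    (hy1 : y ≠ 1) (hcy : (cycle012 * y) ^ 3 = 1) (hcy1 : cycle012 * y ≠ 1) :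
    cycle012 = y ∨ (cycle012 ^ 2 * y) ^ 2 = 1 := by
  revert y
  decide

theorem alternatingGroup.eq_or_sq_mul_sq_eq_one_of_pow_three_eq_one
    {x y : alternatingGroup (Fin 5)} (hx : x ^ 3 = 1) (hx1 : x ≠ 1) (hy : y ^ 3 = 1) (hy1 : y ≠ 1)
    (hxy : (x * y) ^ 3 = 1) (hxy1 : x * y ≠ 1) : x = y ∨ (x ^ 2 * y) ^ 2 = 1 := by
  have hx3 : IsThreeCycle (x : Perm (Fin 5)) :=
    isThreeCycle_of_pow_three_eq_one (by simp) (by exact_mod_cast hx) (by exact_mod_cast hx1)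
  obtain ⟨g, rfl⟩ : ∃ g, MulAut.conj g cycle012 = x := isConj_iff.mp <|
    isThreeCycle_isConj (by simp) Fin.isThreeCycle_cycleRange_two hx3
  obtain ⟨y, rfl⟩ := (MulAut.conj g).surjective y
  simp only [← map_pow, ← map_mul, map_eq_one_iff _ (MulEquiv.injective _),
    (MulAut.conj g).injective.eq_iff, ne_eq] at *
  exact cycle012_eq_or_sq_mul_sq_eq_one y hy hy1 hxy hxy1

theorem stmt_8 (x₁ x₂ : alternatingGroup (Fin 5)) :
    x₁ ^ 10 = 1 ∨ x₂ ^ 10 = 1 ∨ x₁ = x₂ ∨ (x₁ * x₂) ^ 10 = 1 ∨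
      (x₁ ^ 2 * x₂) ^ 2 = 1 := by
  by_contra! h
  obtain ⟨h₁, h₂, hne, h₁₂, hsq⟩ := h
  have order_three {g : alternatingGroup (Fin 5)} (hg : g ^ 10 ≠ 1) : g ^ 3 = 1 ∧ g ≠ 1 :=
    ⟨(alternatingGroup.pow_ten_eq_one_or_pow_three_eq_one g).resolve_left hg,
      by rintro rfl; simp at hg⟩
  obtain ⟨hx, hx1⟩ := order_three h₁
  obtain ⟨hy, hy1⟩ := order_three h₂
  obtain ⟨hxy, hxy1⟩ := order_three h₁₂
  rcases alternatingGroup.eq_or_sq_mul_sq_eq_one_of_pow_three_eq_one hx hx1 hy hy1 hxy hxy1 with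
    h | h
  exacts [hne h, hsq h]
end

section
/- For all x₁, x₂ in the alternating group A_5, at least one of the following holds: x₁⁶ = 1, x₂⁶ = 1, (x₁x₂)⁶ = 1, (x₁x₂²)⁶ = 1, (x₁x₂³)⁶ = 1, or (x₁x₂⁴)⁶ = 1. -/
/-!
Every element of `A₅` has order `1`, `2`, `3` or `5`, so either `x₂ ^ 6 = 1` or `x₂` has order `5`.
An element of prime order `p` in `Perm (Fin p)` is a `p`-cycle, hence conjugate to `finRotate p`.
Conjugating by the same permutation, it suffices to treat `x₂ = finRotate 5`, and that case is a
finite check over the even permutations `x₁`.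
-/

open Equiv Equiv.Perm

namespace Equiv.Perm

theorem isConj_finRotate_of_orderOf_eq {p : ℕ} (hp : p.Prime) {σ : Perm (Fin p)}
    (hσ : orderOf σ = p) : IsConj σ (finRotate p) := by
  have hcard : (Fintype.card (Fin p)).Prime := by rwa [Fintype.card_fin]
  have hσ_cycle : σ.IsCycle := isCycle_of_prime_order'' hcard (by rw [hσ, Fintype.card_fin])
  refine hσ_cycle.isConj (isCycle_finRotate_of_le hp.two_le) ?_
  rw [← hσ_cycle.orderOf, hσ, support_finRotate_of_le hp.two_le, Finset.card_univ,
    Fintype.card_fin]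

set_option maxRecDepth 10000 in
theorem exists_pow_six_mul_finRotate_pow_eq_one (a : Perm (Fin 5)) (ha : sign a = 1) :
    ∃ k < 5, (a * finRotate 5 ^ k) ^ 6 = 1 := by
  revert a
  decide

theorem exists_pow_six_mul_pow_eq_one_of_orderOf_eq_five {a b : Perm (Fin 5)} (ha : sign a = 1)
    (hb : orderOf b = 5) : ∃ k < 5, (a * b ^ k) ^ 6 = 1 := by
  obtain ⟨c, hc⟩ := isConj_iff.mp (isConj_finRotate_of_orderOf_eq Nat.prime_five hb)
  obtain ⟨k, hk, h⟩ := exists_pow_six_mul_finRotate_pow_eq_one (MulAut.conj c a) (by simp [ha])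
  refine ⟨k, hk, (MulAut.conj c).map_eq_one_iff.mp ?_⟩
  rwa [map_pow, map_mul, map_pow, MulAut.conj_apply c b, hc]

end Equiv.Perm

set_option maxRecDepth 10000 in
theorem alternatingGroup.pow_six_eq_one_or_pow_five_eq_one (x : alternatingGroup (Fin 5)) :
    x ^ 6 = 1 ∨ x ^ 5 = 1 := by
  revert x
  decide

theorem stmt_9 (x₁ x₂ : alternatingGroup (Fin 5)) :
    x₁ ^ 6 = 1 ∨ x₂ ^ 6 = 1 ∨ (x₁ * x₂) ^ 6 = 1 ∨ (x₁ * x₂ ^ 2) ^ 6 = 1 ∨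
      (x₁ * x₂ ^ 3) ^ 6 = 1 ∨ (x₁ * x₂ ^ 4) ^ 6 = 1 := by
  rcases alternatingGroup.pow_six_eq_one_or_pow_five_eq_one x₂ with h6 | h5
  · exact Or.inr (Or.inl h6)
  by_cases hx₂ : x₂ = 1
  · exact Or.inr (Or.inl (by rw [hx₂, one_pow]))
  have hord : orderOf (x₂ : Perm (Fin 5)) = 5 := by
    have : Fact (Nat.Prime 5) := ⟨Nat.prime_five⟩
    rw [Subgroup.orderOf_coe, orderOf_eq_prime h5 hx₂]
  obtain ⟨k, hk, h⟩ := exists_pow_six_mul_pow_eq_one_of_orderOf_eq_five x₁.2 hord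
  replace h : (x₁ * x₂ ^ k) ^ 6 = 1 := by exact_mod_cast h
  interval_cases k <;> simp_all
end

section
/- Every group G of order 20 either contains an element of order 10, or is isomorphic to the semidirect product ⟨a, b | a⁵ = b⁴ = 1, b⁻¹ab = a²⟩ (the holomorph of Z_5). -/
/-- The translation `x ↦ x + 1` of `Z_5`. -/
def tr5 : Equiv.Perm (ZMod 5) := Equiv.addLeft 1

/-- The automorphism `x ↦ 2x` of `Z_5`, as a permutation. -/
def mul2 : Equiv.Perm (ZMod 5) where
  toFun x := 2 * x
  invFun x := 3 * x
  left_inv := by decide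
  right_inv := by decide

/-- The holomorph of `Z_5`, i.e. the Frobenius group
`⟨a, b ∣ a⁵ = b⁴ = 1, b⁻¹ a b = a²⟩` of order 20, realized as the subgroup of
`Sym(Z_5)` generated by the translation `a : x ↦ x + 1` and `b : x ↦ 2x`. -/
def F20 : Subgroup (Equiv.Perm (ZMod 5)) := Subgroup.closure {tr5, mul2}

section Aux

variable {G : Type*} [Group G]

/-- The homomorphism `G →* Perm (ZMod 5)` obtained by transporting the
action of `G` on `G ⧸ Q` along a bijection `e : ZMod 5 ≃ G ⧸ Q`. -/
noncomputable def homOf (Q : Subgroup G) (e : ZMod 5 ≃ G ⧸ Q) :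
    G →* Equiv.Perm (ZMod 5) where
  toFun g := (e.trans (MulAction.toPerm g)).trans e.symm
  map_one' := by ext i; simp
  map_mul' g h := by ext i; simp [mul_smul]

theorem homOf_apply (Q : Subgroup G) (e : ZMod 5 ≃ G ⧸ Q) (g : G) (i : ZMod 5) :
    homOf Q e g i = e.symm (g • e i) := rfl

theorem aux_build [Fintype G] (hc : Nat.card G = 20) (a b : G)
    (ha : orderOf a = 5) (hb : orderOf b = 4)
    (hN : (Subgroup.zpowers a).Normal)
    (hC : Subgroup.centralizer {a} = Subgroup.zpowers a)
    (hba : b * a * b⁻¹ = a ^ 2) : Nonempty (G ≃* F20) := by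
  classical
  have powinj : ∀ m n : ℕ, a ^ m = a ^ n ↔ (m : ZMod 5) = (n : ZMod 5) := by
    intro m n
    rw [pow_eq_pow_iff_modEq, ha, ZMod.natCast_eq_natCast_iff]
  set Q := Subgroup.zpowers b with hQ
  -- trivial intersection of ⟨a⟩ and ⟨b⟩
  have key : ∀ x : G, x ∈ Subgroup.zpowers a → x ∈ Q → x = 1 := by
    intro x hxa hxb
    have h5 : orderOf x ∣ 5 := by
      have := Subgroup.orderOf_dvd_natCard _ hxa
      rwa [Nat.card_zpowers, ha] at this
    have h4 : orderOf x ∣ 4 := by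
      have := Subgroup.orderOf_dvd_natCard _ hxb
      rwa [Nat.card_zpowers, hb] at this
    have : orderOf x ∣ 1 := Nat.dvd_gcd h4 h5
    rw [Nat.dvd_one] at this
    exact orderOf_eq_one_iff.mp this
  -- a and b generate G
  have htop : Subgroup.closure {a, b} = ⊤ := by
    apply Subgroup.eq_top_of_card_eq
    have h5 : (5 : ℕ) ∣ Nat.card (Subgroup.closure {a, b} : Subgroup G) := by
      rw [← ha, ← Nat.card_zpowers]
      exact Subgroup.card_dvd_of_le (Subgroup.zpowers_le.mpr
        (Subgroup.subset_closure (by simp)))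
    have h4 : (4 : ℕ) ∣ Nat.card (Subgroup.closure {a, b} : Subgroup G) := by
      rw [← hb, ← Nat.card_zpowers]
      exact Subgroup.card_dvd_of_le (Subgroup.zpowers_le.mpr
        (Subgroup.subset_closure (by simp)))
    have h20 : (20 : ℕ) ∣ Nat.card (Subgroup.closure {a, b} : Subgroup G) :=
      (Nat.Coprime.mul_dvd_of_dvd_of_dvd (by norm_num) h4 h5)
    have hdvd : Nat.card (Subgroup.closure {a, b} : Subgroup G) ∣ 20 := by
      rw [← hc]; exact Subgroup.card_subgroup_dvd_card _
    rw [hc]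
    exact Nat.dvd_antisymm hdvd h20
  -- cardinalities
  have hQcard : Nat.card Q = 4 := by rw [hQ, Nat.card_zpowers, hb]
  have hquot : Nat.card (G ⧸ Q) = 5 := by
    have := Subgroup.card_eq_card_quotient_mul_card_subgroup Q
    rw [hc, hQcard] at this
    omega
  -- the bijection ZMod 5 ≃ G ⧸ Q
  set g5 : ZMod 5 → G ⧸ Q := fun i => ((a ^ i.val : G) : G ⧸ Q) with hg5
  have hg5inj : Function.Injective g5 := by
    intro i j hij
    have : (a ^ i.val)⁻¹ * a ^ j.val ∈ Q := QuotientGroup.eq.mp hij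
    have hmem : (a ^ i.val)⁻¹ * a ^ j.val ∈ Subgroup.zpowers a := by
      exact Subgroup.mul_mem _ (Subgroup.inv_mem _ (pow_mem
        (Subgroup.mem_zpowers a) _)) (pow_mem (Subgroup.mem_zpowers a) _)
    have h1 : (a ^ i.val)⁻¹ * a ^ j.val = 1 := key _ hmem this
    have h2 : a ^ i.val = a ^ j.val := by
      rw [← mul_one (a ^ i.val), ← h1]; group
    have := (powinj _ _).mp h2
    simpa [ZMod.natCast_val, ZMod.cast_id] using this
  have hg5bij : Function.Bijective g5 := by
    rw [Nat.bijective_iff_injective_and_card]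
    refine ⟨hg5inj, ?_⟩
    rw [hquot, Nat.card_eq_fintype_card]
    rfl
  set e : ZMod 5 ≃ G ⧸ Q := Equiv.ofBijective g5 hg5bij with he_def
  have he : ∀ m : ℕ, e ((m : ZMod 5)) = ((a ^ m : G) : G ⧸ Q) := by
    intro m
    have h0 : e ((m : ZMod 5)) = ((a ^ ((m : ZMod 5)).val : G) : G ⧸ Q) := rfl
    rw [h0]
    congr 1
    rw [powinj]
    simp [ZMod.natCast_val, ZMod.cast_id]
  have he' : ∀ m : ℕ, e.symm ((a ^ m : G) : G ⧸ Q) = (m : ZMod 5) := by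
    intro m; rw [← he m, Equiv.symm_apply_apply]
  have hei : ∀ i : ZMod 5, e i = ((a ^ i.val : G) : G ⧸ Q) := by
    intro i
    have : i = ((i.val : ℕ) : ZMod 5) := by simp [ZMod.natCast_val, ZMod.cast_id]
    rw [this, he]
    simp [ZMod.natCast_val, ZMod.cast_id]
  set f : G →* Equiv.Perm (ZMod 5) := homOf Q e with hf
  -- f a = tr5
  have hfa : f a = tr5 := by
    ext i
    rw [hf, homOf_apply, hei i]
    rw [MulAction.Quotient.smul_mk, smul_eq_mul, ← pow_succ']
    rw [he']
    show _ = 1 + i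
    push_cast
    rw [ZMod.natCast_val, ZMod.cast_id]
    ring
  -- f b = mul2
  have hconj : ∀ n : ℕ, b * a ^ n = a ^ (2 * n) * b := by
    intro n
    have h1 : b * a ^ n * b⁻¹ = a ^ (2 * n) := by
      rw [← conj_pow, hba, ← pow_mul]
    rw [← h1]; group
  have hfb : f b = mul2 := by
    ext i
    rw [hf, homOf_apply, hei i]
    rw [MulAction.Quotient.smul_mk, smul_eq_mul, hconj,
      QuotientGroup.mk_mul_of_mem _ (Subgroup.mem_zpowers b), he']
    show _ = 2 * i
    push_cast
    rw [ZMod.natCast_val, ZMod.cast_id]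
  -- f is injective
  have hinj : Function.Injective f := by
    rw [injective_iff_map_eq_one]
    intro g hg
    have h0 : g • e 0 = e 0 := by
      have := Equiv.ext_iff.mp hg (0 : ZMod 5)
      rw [hf, homOf_apply] at this
      have := congrArg e this
      rwa [Equiv.apply_symm_apply] at this
    have h1 : g • e 1 = e 1 := by
      have := Equiv.ext_iff.mp hg (1 : ZMod 5)
      rw [hf, homOf_apply] at this
      have := congrArg e this
      rwa [Equiv.apply_symm_apply] at this
    rw [hei] at h0 h1
    have hv0 : (0 : ZMod 5).val = 0 := rfl
    have hv1 : (1 : ZMod 5).val = 1 := rfl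
    rw [hv0, pow_zero] at h0
    rw [hv1, pow_one] at h1
    rw [MulAction.Quotient.smul_mk, smul_eq_mul, mul_one] at h0
    rw [MulAction.Quotient.smul_mk, smul_eq_mul] at h1
    have hgQ : g ∈ Q := by
      have := QuotientGroup.eq.mp h0
      simpa using (Subgroup.inv_mem_iff Q).mp (by simpa using Subgroup.inv_mem Q this)
    have hagQ' : a⁻¹ * g⁻¹ * a ∈ Q := by
      have := QuotientGroup.eq.mp h1
      rwa [mul_inv_rev] at this
    -- h := g * (a⁻¹ * g⁻¹ * a) ∈ Q and ∈ ⟨a⟩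
    have hhQ : g * (a⁻¹ * g⁻¹ * a) ∈ Q := Subgroup.mul_mem _ hgQ hagQ'
    have hha : g * (a⁻¹ * g⁻¹ * a) ∈ Subgroup.zpowers a := by
      have hconjmem : g * a⁻¹ * g⁻¹ ∈ Subgroup.zpowers a :=
        hN.conj_mem _ (Subgroup.inv_mem _ (Subgroup.mem_zpowers a)) g
      have : g * (a⁻¹ * g⁻¹ * a) = (g * a⁻¹ * g⁻¹) * a := by group
      rw [this]
      exact Subgroup.mul_mem _ hconjmem (Subgroup.mem_zpowers a)
    have h1' : g * (a⁻¹ * g⁻¹ * a) = 1 := key _ hha hhQ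
    have hcomm : a * g = g * a := by
      have : g * a⁻¹ * g⁻¹ * a = 1 := by rw [← h1']; group
      have h2 : g * a⁻¹ * g⁻¹ = a⁻¹ := by
        have := congrArg (· * a⁻¹) this
        simpa [mul_assoc] using this
      have h3 : g * a⁻¹ = a⁻¹ * g := by
        have := congrArg (· * g) h2
        simpa [mul_assoc] using this
      have := congrArg (fun x => a * x * a) h3
      simpa [mul_assoc] using this
    have hgC : g ∈ Subgroup.centralizer {a} := by
      rw [Subgroup.mem_centralizer_iff]
      intro h hh
      rw [Set.mem_singleton_iff] at hh
      rw [hh]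
      exact hcomm
    rw [hC] at hgC
    exact key _ hgC hgQ
  -- conclude
  have hmap : Subgroup.map f ⊤ = F20 := by
    rw [← htop, MonoidHom.map_closure]
    rw [show (⇑f '' {a, b}) = {tr5, mul2} by rw [Set.image_pair, hfa, hfb]]
    rfl
  exact ⟨(Subgroup.topEquiv.symm.trans (Subgroup.equivMapOfInjective ⊤ f hinj)).trans
    (MulEquiv.subgroupCongr hmap)⟩

/-- The unit `2` of `ZMod 5`. -/
def u2unit : (ZMod 5)ˣ := ⟨2, 3, by decide, by decide⟩

theorem u2unit_orderOf : orderOf u2unit = 4 := by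
  rw [orderOf_eq_iff (by norm_num)]
  exact ⟨by decide, by decide⟩

theorem units5_card : Nat.card (ZMod 5)ˣ = 4 := by
  rw [Nat.card_eq_fintype_card]
  rfl

end Aux

theorem stmt_11 (G : Type*) [Group G] [Fintype G] (hcard : Fintype.card G = 20) :
    (∃ g : G, orderOf g = 10) ∨ Nonempty (G ≃* F20) := by
  classical
  have hc : Nat.card G = 20 := by rw [Nat.card_eq_fintype_card, hcard]
  haveI h5p : Fact (Nat.Prime 5) := ⟨by norm_num⟩
  haveI h2p : Fact (Nat.Prime 2) := ⟨by norm_num⟩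
  obtain ⟨a, ha⟩ := exists_prime_orderOf_dvd_card (G := G) 5 (by rw [hcard]; norm_num)
  have cardP : Nat.card (Subgroup.zpowers a) = 5 := by rw [Nat.card_zpowers, ha]
  have factkey : (5 : ℕ) ^ (Nat.card G).factorization 5 = 5 := by
    have h45 : (Nat.factorization 4) 5 = 0 := Nat.factorization_eq_zero_of_not_dvd (by norm_num)
    have h55 : (Nat.factorization 5) 5 = 1 := Nat.Prime.factorization_self (by norm_num)
    rw [hc, show (20 : ℕ) = 4 * 5 by norm_num,
      Nat.factorization_mul (by norm_num) (by norm_num)]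
    simp [h45, h55]
  set S : Sylow 5 G := Sylow.ofCard (Subgroup.zpowers a) (cardP.trans factkey.symm) with hS
  have hScoe : (S : Subgroup G) = Subgroup.zpowers a := Sylow.coe_ofCard _ _
  -- number of Sylow 5-subgroups is 1
  have hone : Nat.card (Sylow 5 G) = 1 := by
    have h1 := card_sylow_modEq_one 5 G
    have h2 : Nat.card (Sylow 5 G) ∣ (Subgroup.zpowers a).index := by
      have := Sylow.card_dvd_index S
      rwa [hScoe] at this
    have hidx : (Subgroup.zpowers a).index = 4 := by
      have := Subgroup.card_mul_index (Subgroup.zpowers a)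
      rw [cardP, hc] at this
      omega
    rw [hidx] at h2
    have hle : Nat.card (Sylow 5 G) ≤ 4 := Nat.le_of_dvd (by norm_num) h2
    have := h1
    rw [Nat.ModEq] at this
    omega
  haveI : Subsingleton (Sylow 5 G) := (Nat.card_eq_one_iff_unique.mp hone).1
  have hN : (Subgroup.zpowers a).Normal := by
    rw [← hScoe, ← Subgroup.normalizer_eq_top_iff]
    rw [Subgroup.eq_top_iff']
    intro g
    refine Sylow.smul_eq_iff_mem_normalizer.mp ?_
    exact Subsingleton.elim _ _
  -- centralizer of a
  set C := Subgroup.centralizer ({a} : Set G) with hCdef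
  have hPC : Subgroup.zpowers a ≤ C := by
    rw [Subgroup.zpowers_le, Subgroup.mem_centralizer_iff]
    intro h hh
    rw [Set.mem_singleton_iff] at hh
    rw [hh]
  have h5C : (5 : ℕ) ∣ Nat.card C := by
    rw [← cardP]
    exact Subgroup.card_dvd_of_le hPC
  by_cases h2C : (2 : ℕ) ∣ Nat.card C
  · -- element of order 2 commuting with a : element of order 10
    left
    have : (2 : ℕ) ∣ Fintype.card C := by rwa [← Nat.card_eq_fintype_card]
    obtain ⟨x, hx⟩ := exists_prime_orderOf_dvd_card (G := C) 2 this
    have hxG : orderOf (x : G) = 2 := by rw [orderOf_submonoid]; exact hx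
    have hcomm : Commute a (x : G) := Subgroup.mem_centralizer_iff.mp x.2 a rfl
    refine ⟨a * x, ?_⟩
    rw [hcomm.orderOf_mul_eq_mul_orderOf_of_coprime (by rw [ha, hxG]; norm_num),
      ha, hxG]
  · -- centralizer has order 5, build the Frobenius structure
    have hCcard : Nat.card C = 5 := by
      have hdvd : Nat.card C ∣ 20 := by rw [← hc]; exact Subgroup.card_subgroup_dvd_card _
      have hle : Nat.card C ≤ 20 := Nat.le_of_dvd (by norm_num) hdvd
      interval_cases h : Nat.card C <;> omega
    have hCeq : C = Subgroup.zpowers a :=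
      (Subgroup.eq_of_le_of_card_ge hPC (by rw [cardP, hCcard])).symm
    have powinj : ∀ m n : ℕ, a ^ m = a ^ n ↔ (m : ZMod 5) = (n : ZMod 5) := by
      intro m n
      rw [pow_eq_pow_iff_modEq, ha, ZMod.natCast_eq_natCast_iff]
    -- the conjugation exponent map
    have spec : ∀ g : G, ∃ m : ℕ, g * a * g⁻¹ = a ^ m := by
      intro g
      have hmem : g * a * g⁻¹ ∈ Subgroup.zpowers a := hN.conj_mem a (Subgroup.mem_zpowers a) g
      rw [← mem_powers_iff_mem_zpowers] at hmem
      obtain ⟨m, hm⟩ := hmem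
      exact ⟨m, hm.symm⟩
    set k : G → ZMod 5 := fun g => ((Classical.choose (spec g) : ℕ) : ZMod 5) with hk
    have conj_eq : ∀ g : G, g * a * g⁻¹ = a ^ (k g).val := by
      intro g
      rw [Classical.choose_spec (spec g)]
      rw [powinj]
      simp [hk, ZMod.natCast_val, ZMod.cast_id]
    have k_eq_iff : ∀ (g : G) (i : ZMod 5), k g = i ↔ g * a * g⁻¹ = a ^ i.val := by
      intro g i
      constructor
      · rintro rfl; exact conj_eq g
      · intro h
        have h2 : a ^ (k g).val = a ^ i.val := by rw [← conj_eq g, h]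
        have := (powinj _ _).mp h2
        simpa [ZMod.natCast_val, ZMod.cast_id] using this
    have k_mul : ∀ g h : G, k (g * h) = k g * k h := by
      intro g h
      rw [k_eq_iff]
      have h1 : (g * h) * a * (g * h)⁻¹ = g * (h * a * h⁻¹) * g⁻¹ := by group
      rw [h1, conj_eq h, ← conj_pow, conj_eq g, ← pow_mul]
      rw [powinj]
      push_cast
      simp [ZMod.natCast_val, ZMod.cast_id]
    have k_one : k 1 = 1 := by
      rw [k_eq_iff]
      have hv1 : ((1 : ZMod 5)).val = 1 := rfl
      rw [hv1, pow_one]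
      group
    -- K as a monoid hom to units
    set K : G →* (ZMod 5)ˣ :=
      { toFun := fun g => ⟨k g, k g⁻¹, by rw [← k_mul, mul_inv_cancel, k_one],
          by rw [← k_mul, inv_mul_cancel, k_one]⟩
        map_one' := by ext; simp [k_one]
        map_mul' := fun g h => by ext; simp [k_mul] } with hK
    have hker : K.ker = C := by
      ext g
      rw [MonoidHom.mem_ker]
      constructor
      · intro h
        have : k g = 1 := by
          have h' := congrArg Units.val h
          rw [Units.val_one] at h'
          exact h' 
        rw [k_eq_iff] at this
        have hv1 : ((1 : ZMod 5)).val = 1 := rfl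
        rw [hv1, pow_one] at this
        rw [hCdef, Subgroup.mem_centralizer_iff]
        intro x hx
        rw [Set.mem_singleton_iff] at hx
        subst hx
        have := congrArg (· * g) this
        simpa [mul_assoc] using this.symm
      · intro h
        rw [hCdef, Subgroup.mem_centralizer_iff] at h
        have hcomm := h a rfl
        ext
        show k g = 1
        rw [k_eq_iff]
        have hv1 : ((1 : ZMod 5)).val = 1 := rfl
        rw [hv1, pow_one, ← hcomm]
        group
    -- K is surjective
    have hKsurj : Function.Surjective K := by
      have hrange : K.range = ⊤ := by
        apply Subgroup.eq_top_of_card_eq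
        have hq : Nat.card (G ⧸ K.ker) = 4 := by
          have hkc : Nat.card K.ker = 5 := by rw [hker]; exact hCcard
          have := Subgroup.card_eq_card_quotient_mul_card_subgroup K.ker
          rw [hc, hkc] at this
          omega
        have : Nat.card K.range = 4 := by
          rw [← Nat.card_congr (QuotientGroup.quotientKerEquivRange K).toEquiv, hq]
        rw [this, units5_card.symm]
      intro u
      have : u ∈ K.range := by rw [hrange]; trivial
      exact this
    -- get b with b * a * b⁻¹ = a ^ 2
    set u2 : (ZMod 5)ˣ := u2unit with hu2
    obtain ⟨b, hbK⟩ := hKsurj u2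
    have hba : b * a * b⁻¹ = a ^ 2 := by
      have : k b = 2 := by
        have h' := congrArg Units.val hbK
        exact h' 
      rw [k_eq_iff] at this
      have hv2 : ((2 : ZMod 5)).val = 2 := rfl
      rwa [hv2] at this
    -- order of b
    have hu2ord : orderOf u2 = 4 := u2unit_orderOf
    have h4dvd : (4 : ℕ) ∣ orderOf b := by
      rw [← hu2ord, ← hbK]
      exact orderOf_map_dvd K b
    have hbdvd : orderOf b ∣ 20 := by rw [← hc]; exact orderOf_dvd_natCard b
    have hbcases : orderOf b = 4 ∨ orderOf b = 20 := by
      have hle : orderOf b ≤ 20 := Nat.le_of_dvd (by norm_num) hbdvd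
      interval_cases h : orderOf b <;> omega
    rcases hbcases with hb4 | hb20
    · right
      exact aux_build hc a b ha hb4 hN hCeq hba
    · left
      refine ⟨b ^ 2, ?_⟩
      rw [orderOf_pow, hb20]
      norm_num
end

section
/- Every group of order 40 contains an element of order 10. -/
theorem stmt_12 (G : Type*) [Group G] [Fintype G] (hcard : Fintype.card G = 40) :
    ∃ g : G, orderOf g = 10 := by
  have h5 : Fact (Nat.Prime 5) := ⟨by norm_num⟩
  have h2 : Fact (Nat.Prime 2) := ⟨by norm_num⟩
  have hG : Nat.card G = 40 := by rw [Nat.card_eq_fintype_card, hcard]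
  obtain ⟨P⟩ : Nonempty (Sylow 5 G) := inferInstance
  -- card of P is 5
  have hPcard : Nat.card P = 5 := by
    have h := P.card_eq_multiplicity
    rw [hG] at h
    rw [h, show (40:ℕ) = 2^3*5 by norm_num,
      Nat.factorization_mul (by norm_num) (by norm_num)]
    norm_num [Nat.Prime.factorization (by norm_num : Nat.Prime 5),
      Nat.factorization_eq_zero_of_not_dvd (by norm_num : ¬ (5:ℕ) ∣ 8)]
  -- number of Sylow 5-subgroups is 1
  have hsyl : Nat.card (Sylow 5 G) = 1 := by
    have hdvd : Nat.card (Sylow 5 G) ∣ (P : Subgroup G).index := P.card_dvd_index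
    have hindex : (P : Subgroup G).index = 8 := by
      have h := Subgroup.card_mul_index (P : Subgroup G)
      rw [hPcard, hG] at h
      omega
    rw [hindex] at hdvd
    have hmod : Nat.card (Sylow 5 G) % 5 = 1 % 5 := card_sylow_modEq_one 5 G
    have hle : Nat.card (Sylow 5 G) ≤ 8 := Nat.le_of_dvd (by norm_num) hdvd
    interval_cases h : Nat.card (Sylow 5 G) <;> omega
  have hsub : Subsingleton (Sylow 5 G) := (Nat.card_eq_one_iff_unique.mp hsyl).1
  -- P is normal
  have hnorm : (P : Subgroup G).Normal := by
    rw [← Subgroup.normalizer_eq_top_iff, Subgroup.eq_top_iff']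
    intro g
    exact Sylow.smul_eq_iff_mem_normalizer.mp (Subsingleton.elim _ _)
  -- conjugation action on P
  let f : G →* MulAut (P : Subgroup G) := MulAut.conjNormal
  set K := f.ker with hK
  -- P is cyclic of prime order
  have hPcyc : IsCyclic (P : Subgroup G) := isCyclic_of_prime_card hPcard
  have hAut : Nat.card (MulAut (P : Subgroup G)) = 4 := by
    have := IsCyclic.card_mulAut (G := (P : Subgroup G))
    rw [hPcard] at this
    simpa [Nat.totient_prime h5.out] using this
  -- card of kernel is divisible by 10
  have hQdvd : Nat.card (G ⧸ K) ∣ 4 := by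
    rw [← hAut, Nat.card_congr (QuotientGroup.quotientKerEquivRange f).toEquiv]
    exact Subgroup.card_subgroup_dvd_card _
  have hKmul : Nat.card K * Nat.card (G ⧸ K) = 40 := by
    rw [← hG, ← Subgroup.card_mul_index K, Subgroup.index_eq_card]
  have h10 : 10 ∣ Nat.card K := by
    have h4 : Nat.card (G ⧸ K) ≤ 4 := Nat.le_of_dvd (by norm_num) hQdvd
    have hpos : 0 < Nat.card (G ⧸ K) := Nat.pos_of_dvd_of_pos hQdvd (by norm_num)
    interval_cases h : Nat.card (G ⧸ K) <;> omega
  -- element of order 2 in K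
  obtain ⟨t, ht⟩ := exists_prime_orderOf_dvd_card' (G := K) 2 (dvd_trans ⟨5, rfl⟩ h10)
  -- element of order 5 in K
  obtain ⟨a, ha⟩ := exists_prime_orderOf_dvd_card' (G := K) 5 (dvd_trans ⟨2, by norm_num⟩ h10)
  -- a lies in P
  have haG : orderOf (a : G) = 5 := by rw [Subgroup.orderOf_coe, ha]
  have haP : (a : G) ∈ (P : Subgroup G) := by
    have hpg : IsPGroup 5 (Subgroup.zpowers (a : G)) :=
      IsPGroup.of_card (by rw [Nat.card_zpowers, haG, pow_one])
    obtain ⟨Q, hQ⟩ := hpg.exists_le_sylow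
    have : Q = P := Subsingleton.elim _ _
    exact this ▸ hQ (Subgroup.mem_zpowers _)
  -- t commutes with a
  have hcomm : Commute (t : G) (a : G) := by
    have htk : f (t : G) = 1 := t.2
    have := congrArg (fun e : MulAut (P : Subgroup G) => ((e ⟨(a : G), haP⟩ : (P : Subgroup G)) : G)) htk
    simp only [MulAut.conjNormal_apply, MulAut.one_apply] at this
    have h' : (t : G) * (a : G) * (t : G)⁻¹ = (a : G) := this
    exact mul_inv_eq_iff_eq_mul.mp h'
  refine ⟨(t : G) * (a : G), ?_⟩
  have htG : orderOf (t : G) = 2 := by rw [Subgroup.orderOf_coe, ht]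
  rw [hcomm.orderOf_mul_eq_mul_orderOf_of_coprime (by rw [htG, haG]; norm_num), htG, haG]
end

section
/- Let α and β be elements of order 3 in the symmetric group S_6 that do not lie in a common Sylow 3-subgroup. Then either αβ or αβ² does not have order dividing 3 (equivalently, at least one of αβ, αβ² is not an element of order 3 or the identity). More precisely: (αβ)³ ≠ 1 or (αβ²)³ ≠ 1, i.e., not both αβ and αβ² have order dividing 3. -/
/-!
Suppose `a ^ 3 = b ^ 3 = (a * b) ^ 3 = (a * b⁻¹) ^ 3 = 1` in a group. These relations force the
commutator `z = ⁅a, b⁆` to commute with `a` and `b` and to satisfy `z ^ 3 = 1`, so every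
element of `⟨a, b⟩` has the form `z ^ k * b ^ j * a ^ i`, and the cube of such an element is
`z ^ (3 * (k + i * j)) * b ^ (3 * j) * a ^ (3 * i) = 1` (a quotient of the Heisenberg group
of order 27). Hence `⟨a, b⟩` is a `3`-group and lies in a Sylow `3`-subgroup.
-/

open scoped commutatorElement

section ExponentThree

variable {G : Type*} [Group G] {a b z : G}

theorem mul_pow_eq_one_comm {n : ℕ} : (a * b) ^ n = 1 ↔ (b * a) ^ n = 1 := by
  suffices ∀ x y : G, (x * y) ^ n = 1 → (y * x) ^ n = 1 from ⟨this a b, this b a⟩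
  intro x y h
  rw [show y * x = x⁻¹ * (x * y) * x⁻¹⁻¹ by group, conj_pow, h]
  group

theorem commute_commutatorElement_left_of_pow_three_eq_one (hb : b ^ 3 = 1)
    (hab : (a * b) ^ 3 = 1) (hab' : (a * b⁻¹) ^ 3 = 1) : Commute ⁅a, b⁆ a := by
  have hbb : b⁻¹ * b⁻¹ = b := by
    rw [← mul_inv_rev, inv_eq_iff_eq_inv, eq_inv_iff_mul_eq_one, ← pow_three', hb]
  have haba : a * b * a = b⁻¹ * a⁻¹ * b⁻¹ :=
    calc a * b * a = (a * b) ^ 3 * (b⁻¹ * a⁻¹ * b⁻¹) := by rw [pow_three']; group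
      _ = b⁻¹ * a⁻¹ * b⁻¹ := by rw [hab, one_mul]
  have : a⁻¹ * ⁅a, b⁆ * a * ⁅a, b⁆⁻¹ = 1 :=
    calc a⁻¹ * ⁅a, b⁆ * a * ⁅a, b⁆⁻¹
        = b * a⁻¹ * b⁻¹ * (a * b * a) * b⁻¹ * a⁻¹ := by simp only [commutatorElement_def]; group
      _ = b * a⁻¹ * (b⁻¹ * b⁻¹) * a⁻¹ * (b⁻¹ * b⁻¹) * a⁻¹ := by rw [haba]; group
      _ = ((a * b⁻¹) ^ 3)⁻¹ := by rw [hbb, pow_three']; group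
      _ = 1 := by rw [hab', inv_one]
  rw [mul_inv_eq_one, mul_assoc, inv_mul_eq_iff_eq_mul] at this
  exact this

theorem pow_mul_pow_eq_of_mul_eq (hza : Commute z a) (hzb : Commute z b)
    (hab : a * b = z * b * a) (i j : ℕ) : a ^ i * b ^ j = z ^ (i * j) * b ^ j * a ^ i := by
  have hb : SemiconjBy a (b ^ j) (z ^ j * b ^ j) := by
    simpa only [hzb.mul_pow] using (show SemiconjBy a b (z * b) from hab).pow_right j
  suffices SemiconjBy (a ^ i) (b ^ j) (z ^ (i * j) * b ^ j) from this
  induction i with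
  | zero => simp
  | succ i ih =>
    rw [pow_succ', add_one_mul, pow_add, mul_assoc]
    exact (SemiconjBy.mul_right (hza.pow_left _).symm hb).mul_left ih

theorem heisenberg_normal_form_mul (hza : Commute z a) (hzb : Commute z b)
    (hab : a * b = z * b * a) (i j k i' j' k' : ℕ) :
    z ^ k * b ^ j * a ^ i * (z ^ k' * b ^ j' * a ^ i') =
      z ^ (k + k' + i * j') * b ^ (j + j') * a ^ (i + i') :=
  calc z ^ k * b ^ j * a ^ i * (z ^ k' * b ^ j' * a ^ i')
      = z ^ k * b ^ j * (z ^ k' * a ^ i) * b ^ j' * a ^ i' := by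
        rw [(hza.pow_pow k' i).eq]; group
    _ = z ^ k * (z ^ k' * b ^ j) * (a ^ i * b ^ j') * a ^ i' := by
        rw [(hzb.pow_pow k' j).eq]; group
    _ = z ^ k * z ^ k' * b ^ j * (z ^ (i * j') * b ^ j' * a ^ i) * a ^ i' := by
        rw [← pow_mul_pow_eq_of_mul_eq hza hzb hab]; group
    _ = z ^ k * z ^ k' * (z ^ (i * j') * b ^ j) * b ^ j' * a ^ i * a ^ i' := by
        rw [(hzb.pow_pow (i * j') j).eq]; group
    _ = z ^ (k + k' + i * j') * b ^ (j + j') * a ^ (i + i') := by group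

theorem heisenberg_normal_form_pow_three (hza : Commute z a) (hzb : Commute z b)
    (hab : a * b = z * b * a) (ha : a ^ 3 = 1) (hb : b ^ 3 = 1) (hz : z ^ 3 = 1) (i j k : ℕ) :
    (z ^ k * b ^ j * a ^ i) ^ 3 = 1 := by
  rw [pow_three, heisenberg_normal_form_mul hza hzb hab,
    heisenberg_normal_form_mul hza hzb hab,
    show k + (k + k + i * j) + i * (j + j) = 3 * (k + i * j) by ring,
    show j + (j + j) = 3 * j by ring, show i + (i + i) = 3 * i by ring]
  simp only [pow_mul, ha, hb, hz, one_pow, mul_one]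

theorem pow_three_eq_one_of_mem_closure_pair (ha : a ^ 3 = 1) (hb : b ^ 3 = 1)
    (hab : (a * b) ^ 3 = 1) (hab' : (a * b⁻¹) ^ 3 = 1) {x : G}
    (hx : x ∈ Subgroup.closure {a, b}) : x ^ 3 = 1 := by
  have hba : (b * a) ^ 3 = 1 := mul_pow_eq_one_comm.mp hab
  have hza : Commute ⁅a, b⁆ a := commute_commutatorElement_left_of_pow_three_eq_one hb hab hab'
  have hzb : Commute ⁅a, b⁆ b := by
    have hba' : (b * a⁻¹) ^ 3 = 1 := by
      rw [← inv_inj, ← inv_pow, mul_inv_rev, inv_inv, hab', inv_one]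
    have := commute_commutatorElement_left_of_pow_three_eq_one ha hba hba'
    rwa [← commutatorElement_inv, Commute.inv_left_iff] at this
  have hzab : a * b = ⁅a, b⁆ * b * a := by simp [commutatorElement_def]
  have hz : ⁅a, b⁆ ^ 3 = 1 := by
    have := (hzb.mul_right hza).mul_pow 3
    rwa [← mul_assoc, ← hzab, hab, hba, mul_one, eq_comm] at this
  have hfin : ∀ y ∈ ({a, b} : Set G), IsOfFinOrder y := by
    rintro y (rfl | rfl) <;> exact isOfFinOrder_iff_pow_eq_one.mpr ⟨3, three_pos, ‹_›⟩
  rw [← Subgroup.mem_toSubmonoid, Subgroup.closure_toSubmonoid_of_isOfFinOrder hfin] at hx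
  obtain ⟨i, j, k, rfl⟩ : ∃ i j k : ℕ, x = ⁅a, b⁆ ^ k * b ^ j * a ^ i := by
    induction hx using Submonoid.closure_induction with
    | mem y hy =>
      rcases hy with rfl | rfl
      exacts [⟨1, 0, 0, by simp⟩, ⟨0, 1, 0, by simp⟩]
    | one => exact ⟨0, 0, 0, by simp⟩
    | mul _ _ _ _ hx hy =>
      obtain ⟨i, j, k, rfl⟩ := hx
      obtain ⟨i', j', k', rfl⟩ := hy
      exact ⟨_, _, _, heisenberg_normal_form_mul hza hzb hzab i j k i' j' k'⟩
  exact heisenberg_normal_form_pow_three hza hzb hzab ha hb hz i j k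

theorem isPGroup_closure_pair_of_pow_three_eq_one (ha : a ^ 3 = 1) (hb : b ^ 3 = 1)
    (hab : (a * b) ^ 3 = 1) (hab' : (a * b⁻¹) ^ 3 = 1) :
    IsPGroup 3 (Subgroup.closure {a, b}) :=
  isPGroup_iff_pow_pow_eq_one.mpr fun x ↦
    ⟨1, Subtype.ext (pow_three_eq_one_of_mem_closure_pair ha hb hab hab' x.2)⟩

end ExponentThree

theorem stmt_13 (α β : Equiv.Perm (Fin 6))
    (hα : orderOf α = 3) (hβ : orderOf β = 3)
    (h : ¬ ∃ P : Sylow 3 (Equiv.Perm (Fin 6)), α ∈ P ∧ β ∈ P) :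
    (α * β) ^ 3 ≠ 1 ∨ (α * β ^ 2) ^ 3 ≠ 1 := by
  by_contra! hcubes
  obtain ⟨h1, h2⟩ := hcubes
  have ha : α ^ 3 = 1 := hα ▸ pow_orderOf_eq_one α
  have hb : β ^ 3 = 1 := hβ ▸ pow_orderOf_eq_one β
  have hb2 : β ^ 2 = β⁻¹ := eq_inv_of_mul_eq_one_left (by rw [← pow_succ, hb])
  obtain ⟨P, hP⟩ :=
    (isPGroup_closure_pair_of_pow_three_eq_one ha hb h1 (hb2 ▸ h2)).exists_le_sylow
  exact h ⟨P, hP (Subgroup.subset_closure (by simp)), hP (Subgroup.subset_closure (by simp))⟩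
end

section
/- Let α and β be 5-cycles in the symmetric group S_6 with Supp(α) ≠ Supp(β) (their supports, as 5-element subsets of the 6 points, are distinct). Then at least one of αβ, αβ³, α²β is not a 5-cycle. -/
/-- A 5-cycle: a cyclic permutation whose support has five points. -/
def IsFiveCycle (σ : Equiv.Perm (Fin 6)) : Prop :=
  σ.IsCycle ∧ σ.support.card = 5

open Equiv Equiv.Perm in
/-- In `S₆`, the 5-cycles are exactly the elements of order 5. -/
lemma isFiveCycle_iff (σ : Equiv.Perm (Fin 6)) : IsFiveCycle σ ↔ σ ≠ 1 ∧ σ ^ 5 = 1 := by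
  constructor
  · rintro ⟨hc, h5⟩
    refine ⟨hc.ne_one, ?_⟩
    have := hc.orderOf
    rw [h5] at this
    rw [← this]
    exact pow_orderOf_eq_one σ
  · rintro ⟨h1, h5⟩
    have hdvd : orderOf σ ∣ 5 := orderOf_dvd_of_pow_eq_one h5
    have ho : orderOf σ = 5 := by
      rcases (Nat.prime_five).eq_one_or_self_of_dvd _ hdvd with h | h
      · exact absurd (orderOf_eq_one_iff.mp h) h1
      · exact h
    have hall : ∀ n ∈ σ.cycleType, n = 5 := by
      intro n hn
      have hd : n ∣ 5 := by
        rw [← ho, ← Equiv.Perm.lcm_cycleType]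
        exact Multiset.dvd_lcm hn
      have h2 : 2 ≤ n := Equiv.Perm.two_le_of_mem_cycleType hn
      rcases (Nat.prime_five).eq_one_or_self_of_dvd _ hd with h | h
      · omega
      · exact h
    have hrep : σ.cycleType = Multiset.replicate (Multiset.card σ.cycleType) 5 :=
      Multiset.eq_replicate_of_mem hall
    have hsum : σ.cycleType.sum = σ.support.card := Equiv.Perm.sum_cycleType σ
    have hle : σ.support.card ≤ 6 := by
      calc σ.support.card ≤ Finset.univ.card := Finset.card_le_univ _
        _ = 6 := by simp
    have hsum' : σ.cycleType.sum = Multiset.card σ.cycleType * 5 := by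
      rw [hrep]; simp [Multiset.sum_replicate, Multiset.card_replicate]
    have hne : Multiset.card σ.cycleType ≠ 0 := by
      intro h
      exact h1 (Equiv.Perm.card_cycleType_eq_zero.mp h)
    have hcard1 : Multiset.card σ.cycleType = 1 := by omega
    refine ⟨Equiv.Perm.card_cycleType_eq_one.mp hcard1, ?_⟩
    omega

/-- The fixed reference 5-cycle `(0 1 2 3 4)`. -/
def c0 : Equiv.Perm (Fin 6) := List.formPerm [0, 1, 2, 3, 4]

set_option synthInstance.maxSize 2000 in
set_option maxRecDepth 100000 in
set_option maxHeartbeats 4000000 in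
lemma key : ∀ x1 x2 x3 x4 : Fin 6, [(5 : Fin 6), x1, x2, x3, x4].Nodup →
    (List.formPerm [(5 : Fin 6), x1, x2, x3, x4]).support ≠ c0.support →
    ((¬ ((c0 * List.formPerm [(5 : Fin 6), x1, x2, x3, x4]) ≠ 1 ∧
        (c0 * List.formPerm [(5 : Fin 6), x1, x2, x3, x4]) ^ 5 = 1)) ∨
     (¬ ((c0 * (List.formPerm [(5 : Fin 6), x1, x2, x3, x4]) ^ 3) ≠ 1 ∧
        (c0 * (List.formPerm [(5 : Fin 6), x1, x2, x3, x4]) ^ 3) ^ 5 = 1)) ∨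
     (¬ ((c0 ^ 2 * List.formPerm [(5 : Fin 6), x1, x2, x3, x4]) ≠ 1 ∧
        (c0 ^ 2 * List.formPerm [(5 : Fin 6), x1, x2, x3, x4]) ^ 5 = 1))) := by
  decide

lemma P_conj (g σ : Equiv.Perm (Fin 6)) :
    ((g * σ * g⁻¹ ≠ 1 ∧ (g * σ * g⁻¹) ^ 5 = 1) ↔ (σ ≠ 1 ∧ σ ^ 5 = 1)) := by
  rw [conj_pow]
  simp only [ne_eq, conj_eq_one_iff]

lemma isFiveCycle_conj (g σ : Equiv.Perm (Fin 6)) :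
    IsFiveCycle (g * σ * g⁻¹) ↔ IsFiveCycle σ := by
  rw [isFiveCycle_iff, isFiveCycle_iff, P_conj]

set_option maxRecDepth 100000 in
lemma c0_isFiveCycle : IsFiveCycle c0 := by
  rw [isFiveCycle_iff]
  constructor <;> decide

theorem stmt_14 (α β : Equiv.Perm (Fin 6))
    (hα : IsFiveCycle α) (hβ : IsFiveCycle β)
    (hsupp : α.support ≠ β.support) :
    ¬ IsFiveCycle (α * β) ∨ ¬ IsFiveCycle (α * β ^ 3) ∨ ¬ IsFiveCycle (α ^ 2 * β) := by
  -- conjugate so that α becomes c0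
  have hconj : IsConj c0 α := by
    apply Equiv.Perm.isConj_of_cycleType_eq
    rw [c0_isFiveCycle.1.cycleType, hα.1.cycleType, c0_isFiveCycle.2, hα.2]
  obtain ⟨g, hg⟩ := isConj_iff.mp hconj
  set β' : Equiv.Perm (Fin 6) := g⁻¹ * β * g with hβ'def
  have hβeq : β = g * β' * g⁻¹ := by rw [hβ'def]; group
  have hαeq : α = g * c0 * g⁻¹ := hg.symm
  -- β' is a five-cycle
  have hβ'5 : IsFiveCycle β' := by
    rw [← isFiveCycle_conj g, ← hβeq]; exact hβ
  -- supports of c0 and β' differ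
  have hsupp' : c0.support ≠ β'.support := by
    intro h
    apply hsupp
    rw [hαeq, hβeq, Equiv.Perm.support_conj, Equiv.Perm.support_conj, h]
  -- 5 lies in the support of β'
  have h5mem : (5 : Fin 6) ∈ β'.support := by
    by_contra h5
    apply hsupp'
    have hc0s : c0.support = Finset.univ \ {(5 : Fin 6)} := by decide
    have hsub : β'.support ⊆ Finset.univ \ {(5 : Fin 6)} := by
      intro x hx
      simp only [Finset.mem_sdiff, Finset.mem_univ, Finset.mem_singleton, true_and]
      rintro rfl
      exact h5 hx
    have hcard : (Finset.univ \ {(5 : Fin 6)}).card ≤ β'.support.card := by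
      rw [hβ'5.2]; decide
    rw [hc0s, Finset.eq_of_subset_of_card_le hsub hcard]
  -- write β' as formPerm of its cycle list at 5
  have hmoves : β' 5 ≠ 5 := Equiv.Perm.mem_support.mp h5mem
  have hcy : β'.cycleOf 5 = β' := hβ'5.1.cycleOf_eq hmoves
  have hL : β'.toList 5 = [(5 : Fin 6), β' 5, (β' ^ 2) 5, (β' ^ 3) 5, (β' ^ 4) 5] := by
    rw [Equiv.Perm.toList, hcy, hβ'5.2]
    simp [List.range_succ]
    exact ⟨rfl, rfl, rfl⟩
  have hform : List.formPerm [(5 : Fin 6), β' 5, (β' ^ 2) 5, (β' ^ 3) 5, (β' ^ 4) 5] = β' := by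
    rw [← hL, Equiv.Perm.formPerm_toList, hcy]
  have hnodup : [(5 : Fin 6), β' 5, (β' ^ 2) 5, (β' ^ 3) 5, (β' ^ 4) 5].Nodup := by
    rw [← hL]; exact Equiv.Perm.nodup_toList β' 5
  have hkey := key (β' 5) ((β' ^ 2) 5) ((β' ^ 3) 5) ((β' ^ 4) 5) hnodup
    (by rw [hform]; exact fun h => hsupp' h.symm)
  rw [hform] at hkey
  -- transfer the conclusion back through conjugation
  have e1 : α * β = g * (c0 * β') * g⁻¹ := by rw [hαeq, hβeq]; group
  have e2 : α * β ^ 3 = g * (c0 * β' ^ 3) * g⁻¹ := by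
    rw [hαeq, hβeq, conj_pow]; group
  have e3 : α ^ 2 * β = g * (c0 ^ 2 * β') * g⁻¹ := by
    rw [hαeq, hβeq, conj_pow]; group
  rcases hkey with h | h | h
  · left; rw [e1, isFiveCycle_conj, isFiveCycle_iff]; exact h
  · right; left; rw [e2, isFiveCycle_conj, isFiveCycle_iff]; exact h
  · right; right; rw [e3, isFiveCycle_conj, isFiveCycle_iff]; exact h
end

section
/- A group G satisfies the disjunctive law (∀ x y, x² = 1 ∨ y² = 1 ∨ xy = yx) if and only if either G is abelian, or G has an abelian subgroup A of index 2 such that every element of G \ A acts on A by inversion (i.e., for all b ∉ A and a ∈ A, b⁻¹ab = a⁻¹, and every element outside A is an involution). -/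
/-!
Let `S` be the set of elements with `x ^ 2 ≠ 1` and `A` its centralizer; by the law, any two
elements of `S` commute. If `a ∈ A` and `s ∈ S`, then `a ∈ S` or `a * s ∈ S`, so every
element of `A` is a quotient of two commuting elements of `S`; hence `A` is abelian. If
`x ∈ S` does not commute with `y`, then it does not commute with `x * y` either, and the law applied
to `(x, y)` and `(x, x * y)` gives `y ^ 2 = 1` and `y⁻¹ * x * y = x⁻¹`. Thus an element `b ∉ A`
is an involution inverting `S`, hence inverting `A`, and the product of two elements outside `A`
centralizes `S`: `A` has index `2`.
-/

open Subgroup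

section

variable {G : Type*} [Group G]

lemma exists_sq_ne_one_of_not_commute (h : ¬∀ x y : G, Commute x y) : ∃ s : G, s ^ 2 ≠ 1 := by
  by_contra! hsq
  exact h (Commute.of_orderOf_dvd_two fun g => orderOf_dvd_of_pow_eq_one (hsq g))

lemma exists_not_commute_of_notMem_centralizer {S : Set G} {b : G} (hb : b ∉ centralizer S) :
    ∃ s ∈ S, ¬Commute s b := by
  simpa [mem_centralizer_iff, Commute, SemiconjBy] using hb

lemma mul_sq_ne_one_of_sq_eq_one {a s : G} (has : Commute a s) (ha : a ^ 2 = 1) (hs : s ^ 2 ≠ 1) :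
    (a * s) ^ 2 ≠ 1 := by
  rwa [has.mul_pow, ha, one_mul]

lemma inv_mul_mul_eq_inv_of_commute {b x y : G} (hxy : Commute x y) (hx : b⁻¹ * x * b = x⁻¹)
    (hy : b⁻¹ * y * b = y⁻¹) : b⁻¹ * (x * y⁻¹) * b = (x * y⁻¹)⁻¹ :=
  calc b⁻¹ * (x * y⁻¹) * b = (b⁻¹ * x * b) * (b⁻¹ * y * b)⁻¹ := by group
    _ = y * x⁻¹ := by rw [hx, hy, inv_inv, hxy.inv_left.eq]
    _ = (x * y⁻¹)⁻¹ := by group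

lemma mul_mem_centralizer_of_inv_mul_mul_eq_inv {S : Set G} {b c : G}
    (hb : ∀ t ∈ S, b⁻¹ * t * b = t⁻¹) (hc : ∀ t ∈ S, c⁻¹ * t * c = t⁻¹) :
    b * c ∈ centralizer S := by
  refine mem_centralizer_iff.mpr fun t ht => ?_
  have hconj : (b * c)⁻¹ * t * (b * c) = t :=
    calc (b * c)⁻¹ * t * (b * c) = c⁻¹ * (b⁻¹ * t * b) * c := by group
      _ = (c⁻¹ * t * c)⁻¹ := by rw [hb t ht]; group
      _ = t := by rw [hc t ht, inv_inv]
  calc t * (b * c) = b * c * ((b * c)⁻¹ * t * (b * c)) := by group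
    _ = b * c * t := by rw [hconj]

def nonInvolutions (G : Type*) [Group G] : Set G := {x | x ^ 2 ≠ 1}

lemma commute_of_mem_centralizer_nonInvolutions {s a a' : G} (hs : s ^ 2 ≠ 1)
    (ha : a ∈ centralizer (nonInvolutions G)) (ha' : a' ∈ centralizer (nonInvolutions G)) :
    Commute a a' := by
  by_cases ha2 : a ^ 2 = 1
  · have has : Commute a s := (mem_centralizer_iff.mp ha s hs).symm
    have hs' : Commute s a' := mem_centralizer_iff.mp ha' s hs
    have has' : Commute (a * s) a' :=
      mem_centralizer_iff.mp ha' _ (mul_sq_ne_one_of_sq_eq_one has ha2 hs)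
    simpa using has'.mul_left hs'.inv_left
  · exact mem_centralizer_iff.mp ha' a ha2

def DisjunctiveLaw (G : Type*) [Group G] : Prop :=
  ∀ x y : G, x ^ 2 = 1 ∨ y ^ 2 = 1 ∨ Commute x y

namespace DisjunctiveLaw

variable {x y a b : G}

lemma commute (hG : DisjunctiveLaw G) (hx : x ^ 2 ≠ 1) (hy : y ^ 2 ≠ 1) : Commute x y :=
  ((hG x y).resolve_left hx).resolve_left hy

lemma sq_eq_one_of_not_commute (hG : DisjunctiveLaw G) (hx : x ^ 2 ≠ 1) (hxy : ¬Commute x y) :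
    y ^ 2 = 1 :=
  ((hG x y).resolve_left hx).resolve_right hxy

lemma inv_mul_mul_eq_inv_of_not_commute (hG : DisjunctiveLaw G) (hx : x ^ 2 ≠ 1)
    (hxy : ¬Commute x y) : y⁻¹ * x * y = x⁻¹ := by
  have hy : y ^ 2 = 1 := hG.sq_eq_one_of_not_commute hx hxy
  have hxxy : ¬Commute x (x * y) := fun h =>
    hxy (mul_left_cancel (a := x) (by simpa only [Commute, SemiconjBy, mul_assoc] using h))
  have hxy' : x * y = y⁻¹ * x⁻¹ := by
    rw [← mul_inv_rev]
    exact eq_inv_of_mul_eq_one_left (by rw [← sq]; exact hG.sq_eq_one_of_not_commute hx hxxy)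
  calc y⁻¹ * x * y = y⁻¹ * (x * y) := mul_assoc _ _ _
    _ = (y ^ 2)⁻¹ * x⁻¹ := by rw [hxy']; group
    _ = x⁻¹ := by rw [hy, inv_one, one_mul]

lemma sq_eq_one_of_notMem_centralizer (hG : DisjunctiveLaw G)
    (hb : b ∉ centralizer (nonInvolutions G)) : b ^ 2 = 1 := by
  obtain ⟨s, hs, hsb⟩ := exists_not_commute_of_notMem_centralizer hb
  exact hG.sq_eq_one_of_not_commute hs hsb

lemma inv_mul_mul_eq_inv_of_notMem_centralizer (hG : DisjunctiveLaw G)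
    (hb : b ∉ centralizer (nonInvolutions G)) (hx : x ^ 2 ≠ 1) : b⁻¹ * x * b = x⁻¹ := by
  obtain ⟨s, hs, hsb⟩ := exists_not_commute_of_notMem_centralizer hb
  refine hG.inv_mul_mul_eq_inv_of_not_commute hx fun hxb => ?_
  -- If `x` commutes with `b`, then `x * b` does not commute with `s`, so the law makes it an
  -- involution; but its square is `x ^ 2`.
  have hsxb : ¬Commute s (x * b) := fun h =>
    hsb (by simpa using ((hG.commute hx hs).symm.inv_right).mul_right h)
  apply hx
  calc x ^ 2 = x ^ 2 * b ^ 2 := by rw [hG.sq_eq_one_of_notMem_centralizer hb, mul_one]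
    _ = (x * b) ^ 2 := (hxb.mul_pow 2).symm
    _ = 1 := hG.sq_eq_one_of_not_commute hs hsxb

lemma inv_mul_mul_eq_inv_of_mem_centralizer (hG : DisjunctiveLaw G)
    (hb : b ∉ centralizer (nonInvolutions G)) (ha : a ∈ centralizer (nonInvolutions G)) :
    b⁻¹ * a * b = a⁻¹ := by
  by_cases ha2 : a ^ 2 = 1
  · obtain ⟨s, hs, -⟩ := exists_not_commute_of_notMem_centralizer hb
    have has : Commute a s := (mem_centralizer_iff.mp ha s hs).symm
    have has2 := mul_sq_ne_one_of_sq_eq_one has ha2 hs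
    simpa using inv_mul_mul_eq_inv_of_commute (has.mul_left (Commute.refl s))
      (hG.inv_mul_mul_eq_inv_of_notMem_centralizer hb has2)
      (hG.inv_mul_mul_eq_inv_of_notMem_centralizer hb hs)
  · exact hG.inv_mul_mul_eq_inv_of_notMem_centralizer hb ha2

lemma index_centralizer_nonInvolutions (hG : DisjunctiveLaw G) (hnc : ¬∀ x y : G, Commute x y) :
    (centralizer (nonInvolutions G)).index = 2 := by
  obtain ⟨s, hs⟩ := exists_sq_ne_one_of_not_commute hnc
  have hne : ∃ b, b ∉ centralizer (nonInvolutions G) := by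
    by_contra! hall
    exact hnc fun x y => commute_of_mem_centralizer_nonInvolutions hs (hall x) (hall y)
  obtain ⟨b, hb⟩ := hne
  refine index_eq_two_iff_exists_notMem_and'.mpr ⟨b, hb, fun g => or_iff_not_imp_right.mpr
    fun hg => ?_⟩
  exact mul_mem_centralizer_of_inv_mul_mul_eq_inv
    (fun _ => hG.inv_mul_mul_eq_inv_of_notMem_centralizer hb)
    (fun _ => hG.inv_mul_mul_eq_inv_of_notMem_centralizer hg)

end DisjunctiveLaw

end

theorem stmt_16 (G : Type*) [Group G] :
    (∀ x y : G, x ^ 2 = 1 ∨ y ^ 2 = 1 ∨ x * y = y * x) ↔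
      ((∀ x y : G, x * y = y * x) ∨
        ∃ A : Subgroup G, A.index = 2 ∧ (∀ a ∈ A, ∀ a' ∈ A, a * a' = a' * a) ∧
          ∀ b : G, b ∉ A → b ^ 2 = 1 ∧ ∀ a ∈ A, b⁻¹ * a * b = a⁻¹) := by
  constructor
  · intro h
    have hG : DisjunctiveLaw G := h
    by_cases hcomm : ∀ x y : G, x * y = y * x
    · exact Or.inl hcomm
    obtain ⟨s, hs⟩ := exists_sq_ne_one_of_not_commute hcomm
    exact Or.inr ⟨centralizer (nonInvolutions G), hG.index_centralizer_nonInvolutions hcomm,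
      fun a ha a' ha' => commute_of_mem_centralizer_nonInvolutions hs ha ha',
      fun b hb => ⟨hG.sq_eq_one_of_notMem_centralizer hb,
        fun a ha => hG.inv_mul_mul_eq_inv_of_mem_centralizer hb ha⟩⟩
  · rintro (hcomm | ⟨A, -, hA, hout⟩) x y
    · exact Or.inr (Or.inr (hcomm x y))
    by_cases hx : x ∈ A
    · by_cases hy : y ∈ A
      · exact Or.inr (Or.inr (hA x hx y hy))
      · exact Or.inr (Or.inl (hout y hy).1)
    · exact Or.inl (hout x hx).1
end

section
/- Every group G of order 72 without elements of order 6 and without elements of order 12, all of whose subgroups of order 8 are isomorphic to the dihedral group D_8, does not exist; i.e., every group of order 72 whose Sylow 2-subgroups are dihedral of order 8 contains an element of order 6 or 12. -/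
open Subgroup
set_option linter.unusedSectionVars false
set_option maxHeartbeats 1000000

section Helpers
variable {G : Type*} [Group G] [Fintype G]



lemma aux_order6 {t k : G} (ht : orderOf t = 2) (hk : orderOf k = 3)
    (h : Commute t k) : orderOf (t * k) = 6 := by
  rw [h.orderOf_mul_eq_mul_orderOf_of_coprime (by rw [ht, hk]; decide), ht, hk]

lemma aux_centralizer {k : G} (hk : orderOf k = 3)
    (heven : 2 ∣ Nat.card (Subgroup.centralizer {k} : Subgroup G)) :
    ∃ g : G, orderOf g = 6 := by
  haveI : Fact (Nat.Prime 2) := ⟨by norm_num⟩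
  haveI : Fintype (Subgroup.centralizer {k} : Subgroup G) := Fintype.ofFinite _
  obtain ⟨t, ht⟩ := exists_prime_orderOf_dvd_card (G := (Subgroup.centralizer {k} : Subgroup G)) 2
    (by rwa [← Nat.card_eq_fintype_card])
  have htG : orderOf (t : G) = 2 := by rw [Subgroup.orderOf_coe, ht]
  have hcomm : Commute (t : G) k := (Subgroup.mem_centralizer_iff.mp t.2 k rfl).symm
  exact ⟨t * k, aux_order6 htG hk hcomm⟩

lemma aux_two_sylows (hc : Fintype.card G = 72) {P Q : Subgroup G}
    (hP : Nat.card P = 9) (hQ : Nat.card Q = 9) (hne : P ≠ Q)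
    {k : G} (hkP : k ∈ P) (hkQ : k ∈ Q) (hk1 : k ≠ 1) :
    ∃ g : G, orderOf g = 6 := by
  haveI : Fact (Nat.Prime 3) := ⟨by norm_num⟩
  have hcG : Nat.card G = 72 := by rw [Nat.card_eq_fintype_card, hc]
  have hPcomm := IsPGroup.commutative_of_card_eq_prime_sq (p := 3) (G := P)
    (by rw [hP]; norm_num)
  have hQcomm := IsPGroup.commutative_of_card_eq_prime_sq (p := 3) (G := Q)
    (by rw [hQ]; norm_num)
  set C : Subgroup G := Subgroup.centralizer {k} with hC
  have hPC : P ≤ C := by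
    intro a ha
    refine Subgroup.mem_centralizer_iff.mpr fun g hg => ?_
    rw [show g = k from hg]
    exact congrArg Subtype.val (hPcomm ⟨k, hkP⟩ ⟨a, ha⟩)
  have hQC : Q ≤ C := by
    intro a ha
    refine Subgroup.mem_centralizer_iff.mpr fun g hg => ?_
    rw [show g = k from hg]
    exact congrArg Subtype.val (hQcomm ⟨k, hkQ⟩ ⟨a, ha⟩)
  have h9 : 9 ∣ Nat.card C := hP ▸ Subgroup.card_dvd_of_le hPC
  have h72 : Nat.card C ∣ 72 := hcG ▸ Subgroup.card_subgroup_dvd_card C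
  have hCne : Nat.card C ≠ 9 := by
    intro h
    have hPeq : P = C := Subgroup.eq_of_le_of_card_ge hPC (by rw [h, hP])
    have hQeq : Q = C := Subgroup.eq_of_le_of_card_ge hQC (by rw [h, hQ])
    exact hne (hPeq.trans hQeq.symm)
  have heven : 2 ∣ Nat.card C := by
    obtain ⟨m, hm⟩ := h9
    have hm8 : m ∣ 8 := by
      have : 9 * m ∣ 9 * 8 := by rw [← hm]; exact h72
      exact (mul_dvd_mul_iff_left (by norm_num : (9:ℕ) ≠ 0)).mp this
    have hm1 : m ≠ 1 := fun h => hCne (by rw [hm, h, mul_one])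
    have hmle : m ≤ 8 := Nat.le_of_dvd (by norm_num) hm8
    have : 2 ∣ m := by interval_cases m <;> omega
    rw [hm]; exact Dvd.dvd.mul_left this 9
  have hkdvd : orderOf k ∣ 9 := by
    have := orderOf_dvd_natCard (⟨k, hkP⟩ : P)
    rwa [Subgroup.orderOf_mk, hP] at this
  have hkne : orderOf k ≠ 1 := by simpa using hk1
  have h39 : orderOf k = 3 ∨ orderOf k = 9 := by
    have hle := Nat.le_of_dvd (by norm_num) hkdvd
    interval_cases h : (orderOf k) <;> omega
  rcases h39 with h3 | h9'
  · exact aux_centralizer h3 heven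
  · have hcomm3 : orderOf (k ^ 3) = 3 := by rw [orderOf_pow, h9']; decide
    have hle : C ≤ Subgroup.centralizer {k ^ 3} := by
      intro c hc
      refine Subgroup.mem_centralizer_iff.mpr fun g hg => ?_
      rw [show g = k ^ 3 from hg]
      have : Commute k c := Subgroup.mem_centralizer_iff.mp hc k rfl
      exact (this.pow_left 3)
    exact aux_centralizer hcomm3 (heven.trans (Subgroup.card_dvd_of_le hle))

/-- The normal-Sylow-3 case: Q normal abelian of order 9, x y commuting involutions
with x*y an involution too (Klein four), gives an element of order 6. -/
lemma aux_klein (hc : Fintype.card G = 72) {Q : Subgroup G} [hQn : Q.Normal]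
    (hQ9 : Nat.card Q = 9) {x y : G}
    (hx2 : x ^ 2 = 1) (hy2 : y ^ 2 = 1) (hxy1 : x * y ≠ 1) (hx1 : x ≠ 1) (hy1 : y ≠ 1)
    (hcxy : x * y = y * x) :
    ∃ g : G, orderOf g = 6 := by
  haveI : Fact (Nat.Prime 2) := ⟨by norm_num⟩
  haveI : Fact (Nat.Prime 3) := ⟨by norm_num⟩
  have hQcomm := IsPGroup.commutative_of_card_eq_prime_sq (p := 3) (G := Q)
    (by rw [hQ9]; norm_num)
  -- an element of order 3 in Q
  haveI : Fintype Q := Fintype.ofFinite _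
  obtain ⟨a₀, ha₀⟩ := exists_prime_orderOf_dvd_card (G := Q) 3
    (by rw [← Nat.card_eq_fintype_card, hQ9]; norm_num)
  have ha3 : orderOf (a₀ : G) = 3 := by rw [Subgroup.orderOf_coe, ha₀]
  set a : G := (a₀ : G) with ha
  have haQ : a ∈ Q := a₀.2
  -- helper: a nontrivial element of Q commuting with an involution u gives order 6
  have step1 : ∀ u : G, u ≠ 1 → u ^ 2 = 1 →
      ∀ b ∈ Q, b ≠ 1 → u * b = b * u → ∃ g : G, orderOf g = 6 := by
    intro u hu1 hu2 b hbQ hb1 hub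
    have hu : orderOf u = 2 := orderOf_eq_prime hu2 hu1
    have hbdvd : orderOf b ∣ 9 := by
      have := orderOf_dvd_natCard (⟨b, hbQ⟩ : Q)
      rwa [Subgroup.orderOf_mk, hQ9] at this
    have hbne : orderOf b ≠ 1 := by simpa using hb1
    have h39 : orderOf b = 3 ∨ orderOf b = 9 := by
      have hle := Nat.le_of_dvd (by norm_num) hbdvd
      interval_cases h : (orderOf b) <;> omega
    rcases h39 with h3 | h9
    · exact ⟨u * b, aux_order6 hu h3 hub⟩
    · have h3 : orderOf (b ^ 3) = 3 := by rw [orderOf_pow, h9]; decide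
      exact ⟨u * b ^ 3, aux_order6 hu h3 ((Commute.pow_right hub 3))⟩
  -- if u acts without fixed points it inverts Q
  by_cases hx : ∃ b ∈ Q, b ≠ 1 ∧ x * b = b * x
  · obtain ⟨b, hbQ, hb1, hb⟩ := hx
    exact step1 x hx1 hx2 b hbQ hb1 hb
  by_cases hy : ∃ b ∈ Q, b ≠ 1 ∧ y * b = b * y
  · obtain ⟨b, hbQ, hb1, hb⟩ := hy
    exact step1 y hy1 hy2 b hbQ hb1 hb
  -- both x and y invert every element of Q
  have hinv : ∀ u : G, u ^ 2 = 1 → (¬∃ b ∈ Q, b ≠ 1 ∧ u * b = b * u) →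
      ∀ b ∈ Q, u * b * u⁻¹ = b⁻¹ := by
    intro u hu2 hfpf b hbQ
    set c : G := u * b * u⁻¹ with hcdef
    have hcQ : c ∈ Q := hQn.conj_mem b hbQ u
    have hdQ : b * c ∈ Q := Q.mul_mem hbQ hcQ
    have hucu : u * c * u⁻¹ = b := by
      rw [hcdef]
      have hu : u * u = 1 := by rw [← pow_two]; exact hu2
      calc u * (u * b * u⁻¹) * u⁻¹ = (u * u) * b * (u * u)⁻¹ := by group
        _ = b := by rw [hu]; simp
    have hfix : u * (b * c) = (b * c) * u := by
      have : u * (b * c) * u⁻¹ = c * b := by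
        have : u * (b * c) * u⁻¹ = (u * b * u⁻¹) * (u * c * u⁻¹) := by group
        rw [this, hucu]
      have hcb : c * b = b * c :=
        congrArg Subtype.val (hQcomm ⟨c, hcQ⟩ ⟨b, hbQ⟩)
      rw [hcb] at this
      calc u * (b * c) = u * (b * c) * u⁻¹ * u := by group
        _ = (b * c) * u := by rw [this]
    have hbc1 : b * c = 1 := by
      by_contra hne
      exact hfpf ⟨b * c, hdQ, hne, hfix⟩
    rw [← hcdef] at *
    calc c = b⁻¹ * (b * c) := by group
      _ = b⁻¹ := by rw [hbc1, mul_one]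
  have hxa : x * a * x⁻¹ = a⁻¹ := hinv x hx2 hx a haQ
  have hya : y * a * y⁻¹ = a⁻¹ := hinv y hy2 hy a haQ
  have hta : (x * y) * a * (x * y)⁻¹ = a := by
    have : (x * y) * a * (x * y)⁻¹ = x * (y * a * y⁻¹) * x⁻¹ := by group
    rw [this, hya]
    calc x * a⁻¹ * x⁻¹ = (x * a * x⁻¹)⁻¹ := by group
      _ = a := by rw [hxa, inv_inv]
  have hcommta : (x * y) * a = a * (x * y) := by
    calc (x * y) * a = ((x * y) * a * (x * y)⁻¹) * (x * y) := by group
      _ = a * (x * y) := by rw [hta]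
  have ht2 : (x * y) ^ 2 = 1 := by
    have : (x * y) ^ 2 = x ^ 2 * y ^ 2 := by
      rw [pow_two, pow_two, pow_two]
      calc x * y * (x * y) = x * (y * x) * y := by group
        _ = x * (x * y) * y := by rw [← hcxy]
        _ = x * x * (y * y) := by group
    rw [this, hx2, hy2, mul_one]
  have ht : orderOf (x * y) = 2 := orderOf_eq_prime ht2 hxy1
  exact ⟨(x * y) * a, aux_order6 ht ha3 hcommta⟩

end Helpers

theorem stmt_17 (G : Type*) [Group G] [Fintype G] (hcard : Fintype.card G = 72)
    (hSyl : ∀ P : Sylow 2 G, Nonempty (P ≃* DihedralGroup 4)) :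
    ∃ g : G, orderOf g = 6 ∨ orderOf g = 12 := by
  classical
  haveI : Fact (Nat.Prime 2) := ⟨by norm_num⟩
  haveI : Fact (Nat.Prime 3) := ⟨by norm_num⟩
  have hcG : Nat.card G = 72 := by rw [Nat.card_eq_fintype_card, hcard]
  suffices h : ∃ g : G, orderOf g = 6 by
    obtain ⟨g, hg⟩ := h; exact ⟨g, Or.inl hg⟩
  -- every Sylow 3-subgroup has cardinality 9
  have hfact : (72:ℕ).factorization 3 = 2 := by
    have h1 : ((3:ℕ)^2).factorization 3 = 2 := by
      rw [Nat.Prime.factorization_pow (by norm_num)]; simp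
    have h2 : (8:ℕ).factorization 3 = 0 := Nat.factorization_eq_zero_of_not_dvd (by norm_num)
    have h72 : (72:ℕ) = 3^2 * 8 := by norm_num
    rw [h72, Nat.factorization_mul (by positivity) (by norm_num), Finsupp.add_apply, h1, h2]
  have hS9 : ∀ R : Sylow 3 G, Nat.card R = 9 := by
    intro R
    rw [Sylow.card_eq_multiplicity, hcG, hfact]; norm_num
  -- number of Sylow 3-subgroups is 1 or 4
  haveI : Fintype (Sylow 3 G) := Fintype.ofFinite _
  set n : ℕ := Nat.card (Sylow 3 G) with hn
  have hmod : n % 3 = 1 % 3 := card_sylow_modEq_one 3 G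
  have hdvd : n ∣ 8 := by
    have h8 : ((default : Sylow 3 G) : Subgroup G).index = 8 := by
      have := Subgroup.card_mul_index ((default : Sylow 3 G) : Subgroup G)
      rw [hS9 default, hcG] at this
      omega
    exact h8 ▸ Sylow.card_dvd_index (default : Sylow 3 G)
  have h14 : n = 1 ∨ n = 4 := by
    have : n ≤ 8 := Nat.le_of_dvd (by norm_num) hdvd
    interval_cases n <;> omega
  rcases h14 with h1 | h4
  · -- the Sylow 3-subgroup is normal
    set Q : Sylow 3 G := default with hQdef
    haveI hsub : Subsingleton (Sylow 3 G) :=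
      (Nat.card_eq_one_iff_unique.mp h1).1
    haveI hQn : (Q : Subgroup G).Normal := by
      rw [← Subgroup.normalizer_eq_top_iff]
      rw [eq_top_iff]
      intro g _
      refine Sylow.smul_eq_iff_mem_normalizer.mp ?_
      exact Subsingleton.elim _ _
    obtain ⟨e⟩ := hSyl default
    set P2 : Sylow 2 G := default with hP2
    have hco : ∀ d : DihedralGroup 4, (((e.symm d : P2) : G) = 1) ↔ d = 1 := by
      intro d
      constructor
      · intro h
        have h1 : (e.symm d : P2) = 1 := by
          exact Subtype.ext h
        have := congrArg e h1
        rwa [MulEquiv.apply_symm_apply, map_one] at this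
      · intro h; rw [h, map_one]; rfl
    have hpow : ∀ d : DihedralGroup 4, d ^ 2 = 1 → (((e.symm d : P2) : G)) ^ 2 = 1 := by
      intro d hd
      have : (e.symm d) ^ 2 = 1 := by rw [← map_pow, hd, map_one]
      rw [← SubmonoidClass.coe_pow, this, OneMemClass.coe_one]
    set x : G := ((e.symm (.r 2) : P2) : G) with hx
    set y : G := ((e.symm (.sr 0) : P2) : G) with hy
    have hxy : x * y = ((e.symm (.sr 2) : P2) : G) := by
      rw [hx, hy, ← Subgroup.coe_mul, ← map_mul]
      norm_num [show (DihedralGroup.r 2 : DihedralGroup 4) * .sr 0 = .sr 2 from by decide]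
    have hyx : y * x = ((e.symm (.sr 2) : P2) : G) := by
      rw [hx, hy, ← Subgroup.coe_mul, ← map_mul]
      norm_num [show (DihedralGroup.sr 0 : DihedralGroup 4) * .r 2 = .sr 2 from by decide]
    exact aux_klein hcard (hS9 Q)
      (hpow _ (by decide)) (hpow _ (by decide))
      (by rw [hxy]; simp only [ne_eq, hco]; decide)
      (by simp only [ne_eq, hco]; decide)
      (by simp only [ne_eq, hco]; decide)
      (hxy.trans hyx.symm)
  · -- four Sylow 3-subgroups
    set φ := MulAction.toPermHom G (Sylow 3 G) with hφ
    set K : Subgroup G := φ.ker with hK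
    have hKi : K.index ∣ 24 := by
      rw [hK, Subgroup.index_ker]
      have h1 : Nat.card φ.range ∣ Nat.card (Equiv.Perm (Sylow 3 G)) :=
        Subgroup.card_subgroup_dvd_card φ.range
      have h2 : Nat.card (Equiv.Perm (Sylow 3 G)) = 24 := by
        rw [Nat.card_eq_fintype_card, Fintype.card_perm,
          ← Nat.card_eq_fintype_card, ← hn, h4]
        decide
      rwa [h2] at h1
    have hKcard : Nat.card K * K.index = 72 := hcG ▸ Subgroup.card_mul_index K
    have h3K : 3 ∣ Nat.card K := by
      by_contra h3
      have hcop : Nat.Coprime 9 (Nat.card K) :=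
        Nat.Coprime.pow_left 2 ((Nat.Prime.coprime_iff_not_dvd (by norm_num)).mpr h3)
      have h9 : (9:ℕ) ∣ Nat.card K * K.index := by rw [hKcard]; norm_num
      have : (9:ℕ) ∣ K.index := hcop.dvd_of_dvd_mul_left h9
      have := this.trans hKi
      norm_num at this
    -- Cauchy: an element of order 3 in K
    haveI : Fintype K := Fintype.ofFinite _
    obtain ⟨k₀, hk₀⟩ := exists_prime_orderOf_dvd_card (G := K) 3
      (by rwa [← Nat.card_eq_fintype_card])
    set k : G := (k₀ : G) with hk
    have hk3 : orderOf k = 3 := by rw [hk, Subgroup.orderOf_coe, hk₀]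
    have hk1 : k ≠ 1 := by
      intro h; rw [h, orderOf_one] at hk3; norm_num at hk3
    -- k lies in some Sylow 3-subgroup P
    have hzp : IsPGroup 3 (Subgroup.zpowers k) := by
      apply IsPGroup.of_card (n := 1)
      rw [Nat.card_zpowers, hk3]; norm_num
    obtain ⟨P, hkP⟩ := hzp.exists_le_sylow
    -- another Sylow 3-subgroup
    have h1lt : 1 < Fintype.card (Sylow 3 G) := by
      rw [← Nat.card_eq_fintype_card, ← hn, h4]; norm_num
    obtain ⟨R, hRP⟩ := Fintype.exists_ne_of_one_lt_card h1lt P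
    -- k normalizes R, hence lies in R
    have hkK : k ∈ K := k₀.2
    have hkR : k • R = R := by
      have : φ k = 1 := hkK
      calc k • R = (φ k) R := rfl
        _ = R := by rw [this]; rfl
    have hkNR : k ∈ Subgroup.normalizer (R : Set G) := Sylow.smul_eq_iff_mem_normalizer.mp hkR
    have hkRmem : k ∈ (R : Subgroup G) := by
      have h1 : k ∈ Subgroup.zpowers k ⊓ Subgroup.normalizer (R : Set G) :=
        ⟨Subgroup.mem_zpowers k, hkNR⟩
      rw [hzp.inf_normalizer_sylow R] at h1
      exact h1.2
    have hPR : (P : Subgroup G) ≠ (R : Subgroup G) := fun h => hRP (Sylow.ext h).symm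
    exact aux_two_sylows hcard (hS9 P) (hS9 R) hPR
      (hkP (Subgroup.mem_zpowers k)) hkRmem hk1
end

section
/- For all x₁, x₂ in the alternating group A_6 such that x₁^30 ≠ 1 and x₂^30 ≠ 1 (equivalently, both are elements of order 4), at least one of (x₁x₂)^15 = 1, (x₁x₂²)^15 = 1, (x₁x₂³)^15 = 1 holds. -/
set_option maxRecDepth 40000
set_option maxHeartbeats 4000000

open Equiv

private def F (a : Fin 6) (b : Fin 5) (d : Fin 4) (e : Fin 3) (f : Fin 2) :
    Equiv.Perm (Fin 6) :=
  Equiv.swap 0 a * Equiv.swap 1 b.succ * Equiv.swap 2 d.succ.succ *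
    Equiv.swap 3 e.succ.succ.succ * Equiv.swap 4 f.succ.succ.succ.succ

private def cc : Equiv.Perm (Fin 6) :=
  Equiv.swap 0 1 * Equiv.swap 1 2 * Equiv.swap 2 3 * Equiv.swap 4 5

private def fswap (x y : Fin 6) : Fin 6 → Fin 6 := fun i =>
  if i = x then y else if i = y then x else i

private def fF (a : Fin 6) (b : Fin 5) (d : Fin 4) (e : Fin 3) (f : Fin 2) :
    Fin 6 → Fin 6 :=
  fswap 0 a ∘ fswap 1 b.succ ∘ fswap 2 d.succ.succ ∘ fswap 3 e.succ.succ.succ ∘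
    fswap 4 f.succ.succ.succ.succ

private def fc : Fin 6 → Fin 6 := ![1, 2, 3, 0, 5, 4]

private def ET (a : Fin 6) (b : Fin 5) (d : Fin 4) (e : Fin 3) (f : Fin 2) : Prop :=
  ((if a = 0 then 0 else 1) + (if b = 0 then 0 else 1) + (if d = 0 then 0 else 1)
    + (if e = 0 then 0 else 1) + (if f = 0 then 0 else 1)) % 2 = 0

instance ET.dec : ∀ a b d e f, Decidable (ET a b d e f) := fun _ _ _ _ _ => by
  unfold ET; infer_instance

private def ggt (Q : Fin 6 → Fin 6) : Fin 6 × Fin 5 × Fin 4 × Fin 3 × Fin 2 :=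
  let i0 : Fin 6 := if Q (Q 0) ≠ 0 then 0 else if Q (Q 1) ≠ 1 then 1 else 2
  let a1 := Q i0; let a2 := Q a1; let a3 := Q a2
  let j : Fin 6 :=
    if Q 0 ≠ 0 ∧ Q (Q 0) = 0 then 0 else if Q 1 ≠ 1 ∧ Q (Q 1) = 1 then 1
    else if Q 2 ≠ 2 ∧ Q (Q 2) = 2 then 2 else if Q 3 ≠ 3 ∧ Q (Q 3) = 3 then 3
    else if Q 4 ≠ 4 ∧ Q (Q 4) = 4 then 4 else 5
  let b' := fswap 0 i0 a1
  let d' := fswap 1 b' (fswap 0 i0 a2)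
  let e' := fswap 2 d' (fswap 1 b' (fswap 0 i0 a3))
  let f' := fswap 3 e' (fswap 2 d' (fswap 1 b' (fswap 0 i0 j)))
  (i0, ⟨(b'.val - 1) % 5, Nat.mod_lt _ (by norm_num)⟩,
    ⟨(d'.val - 2) % 4, Nat.mod_lt _ (by norm_num)⟩,
    ⟨(e'.val - 3) % 3, Nat.mod_lt _ (by norm_num)⟩,
    ⟨(f'.val - 4) % 2, Nat.mod_lt _ (by norm_num)⟩)

private def fgg (Q : Fin 6 → Fin 6) : Fin 6 → Fin 6 :=
  fF (ggt Q).1 (ggt Q).2.1 (ggt Q).2.2.1 (ggt Q).2.2.2.1 (ggt Q).2.2.2.2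

private theorem coeF : ∀ a b d e f, ⇑(F a b d e f) = fF a b d e f := by
  intro a b d e f
  funext x
  simp [F, fF, fswap, Equiv.swap_apply_def, Equiv.Perm.mul_apply, Function.comp]

private theorem coec : ⇑cc = fc := by
  funext x
  have : ∀ x, cc x = fc x := by decide
  exact this x

private theorem ETiff : ∀ a b d e f, ET a b d e f ↔ Equiv.Perm.sign (F a b d e f) = 1 := by
  decide

private theorem mainL : ∀ a b d e f, ¬ ET a b d e f ∨
    (∀ x, (fF a b d e f)^[6] x = x) ∨ (∀ x, (fF a b d e f)^[5] x = x) ∨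
    ((∀ x, fgg (fF a b d e f) (fc x) = fF a b d e f (fgg (fF a b d e f) x)) ∧
      ((∀ x, (fc ∘ (fF a b d e f)^[1])^[3] x = x) ∨
       (∀ x, (fc ∘ (fF a b d e f)^[1])^[5] x = x) ∨
       (∀ x, (fc ∘ (fF a b d e f)^[2])^[3] x = x) ∨
       (∀ x, (fc ∘ (fF a b d e f)^[2])^[5] x = x) ∨
       (∀ x, (fc ∘ (fF a b d e f)^[3])^[3] x = x) ∨
       (∀ x, (fc ∘ (fF a b d e f)^[3])^[5] x = x))) := by
  decide

private theorem pow_eq_one_of_iter (p : Equiv.Perm (Fin 6)) (g : Fin 6 → Fin 6)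
    (hg : ⇑p = g) (n : ℕ) (h : ∀ x, g^[n] x = x) : p ^ n = 1 :=
  Equiv.ext fun x => by
    have hx := h x
    rw [← hg, Equiv.Perm.iterate_eq_pow] at hx
    simpa using hx

private theorem F_surj (q : Equiv.Perm (Fin 6)) : ∃ a b d e f, q = F a b d e f := by
  obtain ⟨a, ha⟩ : ∃ a : Fin 6, a = q 0 := ⟨_, rfl⟩
  obtain ⟨q1, hq1⟩ : ∃ q1, q1 = Equiv.swap 0 a * q := ⟨_, rfl⟩
  have h10 : q1 0 = 0 := by rw [hq1]; simp [ha, Equiv.swap_apply_right]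
  obtain ⟨b', hb'⟩ : ∃ b' : Fin 6, b' = q1 1 := ⟨_, rfl⟩
  have hb'0 : b' ≠ 0 := fun h => absurd (q1.injective ((hb'.symm.trans h).trans h10.symm)) (by decide)
  obtain ⟨q2, hq2⟩ : ∃ q2, q2 = Equiv.swap 1 b' * q1 := ⟨_, rfl⟩
  have h20 : q2 0 = 0 := by
    rw [hq2]; simp only [Equiv.Perm.mul_apply, h10]
    exact Equiv.swap_apply_of_ne_of_ne (by decide) (Ne.symm hb'0)
  have h21 : q2 1 = 1 := by rw [hq2]; simp [← hb', Equiv.swap_apply_right]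
  obtain ⟨d', hd'⟩ : ∃ d' : Fin 6, d' = q2 2 := ⟨_, rfl⟩
  have hd'0 : d' ≠ 0 := fun h => absurd (q2.injective ((hd'.symm.trans h).trans h20.symm)) (by decide)
  have hd'1 : d' ≠ 1 := fun h => absurd (q2.injective ((hd'.symm.trans h).trans h21.symm)) (by decide)
  obtain ⟨q3, hq3⟩ : ∃ q3, q3 = Equiv.swap 2 d' * q2 := ⟨_, rfl⟩
  have h30 : q3 0 = 0 := by
    rw [hq3]; simp only [Equiv.Perm.mul_apply, h20]
    exact Equiv.swap_apply_of_ne_of_ne (by decide) (Ne.symm hd'0)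
  have h31 : q3 1 = 1 := by
    rw [hq3]; simp only [Equiv.Perm.mul_apply, h21]
    exact Equiv.swap_apply_of_ne_of_ne (by decide) (Ne.symm hd'1)
  have h32 : q3 2 = 2 := by rw [hq3]; simp [← hd', Equiv.swap_apply_right]
  obtain ⟨e', he'⟩ : ∃ e' : Fin 6, e' = q3 3 := ⟨_, rfl⟩
  have he'0 : e' ≠ 0 := fun h => absurd (q3.injective ((he'.symm.trans h).trans h30.symm)) (by decide)
  have he'1 : e' ≠ 1 := fun h => absurd (q3.injective ((he'.symm.trans h).trans h31.symm)) (by decide)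
  have he'2 : e' ≠ 2 := fun h => absurd (q3.injective ((he'.symm.trans h).trans h32.symm)) (by decide)
  obtain ⟨q4, hq4⟩ : ∃ q4, q4 = Equiv.swap 3 e' * q3 := ⟨_, rfl⟩
  have h40 : q4 0 = 0 := by
    rw [hq4]; simp only [Equiv.Perm.mul_apply, h30]
    exact Equiv.swap_apply_of_ne_of_ne (by decide) (Ne.symm he'0)
  have h41 : q4 1 = 1 := by
    rw [hq4]; simp only [Equiv.Perm.mul_apply, h31]
    exact Equiv.swap_apply_of_ne_of_ne (by decide) (Ne.symm he'1)
  have h42 : q4 2 = 2 := by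
    rw [hq4]; simp only [Equiv.Perm.mul_apply, h32]
    exact Equiv.swap_apply_of_ne_of_ne (by decide) (Ne.symm he'2)
  have h43 : q4 3 = 3 := by rw [hq4]; simp [← he', Equiv.swap_apply_right]
  obtain ⟨f', hf'⟩ : ∃ f' : Fin 6, f' = q4 4 := ⟨_, rfl⟩
  have hf'0 : f' ≠ 0 := fun h => absurd (q4.injective ((hf'.symm.trans h).trans h40.symm)) (by decide)
  have hf'1 : f' ≠ 1 := fun h => absurd (q4.injective ((hf'.symm.trans h).trans h41.symm)) (by decide)
  have hf'2 : f' ≠ 2 := fun h => absurd (q4.injective ((hf'.symm.trans h).trans h42.symm)) (by decide)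
  have hf'3 : f' ≠ 3 := fun h => absurd (q4.injective ((hf'.symm.trans h).trans h43.symm)) (by decide)
  obtain ⟨q5, hq5⟩ : ∃ q5, q5 = Equiv.swap 4 f' * q4 := ⟨_, rfl⟩
  have h50 : q5 0 = 0 := by
    rw [hq5]; simp only [Equiv.Perm.mul_apply, h40]
    exact Equiv.swap_apply_of_ne_of_ne (by decide) (Ne.symm hf'0)
  have h51 : q5 1 = 1 := by
    rw [hq5]; simp only [Equiv.Perm.mul_apply, h41]
    exact Equiv.swap_apply_of_ne_of_ne (by decide) (Ne.symm hf'1)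
  have h52 : q5 2 = 2 := by
    rw [hq5]; simp only [Equiv.Perm.mul_apply, h42]
    exact Equiv.swap_apply_of_ne_of_ne (by decide) (Ne.symm hf'2)
  have h53 : q5 3 = 3 := by
    rw [hq5]; simp only [Equiv.Perm.mul_apply, h43]
    exact Equiv.swap_apply_of_ne_of_ne (by decide) (Ne.symm hf'3)
  have h54 : q5 4 = 4 := by rw [hq5]; simp [← hf', Equiv.swap_apply_right]
  have h55 : q5 5 = 5 := by
    have n0 : q5 5 ≠ 0 := fun h => absurd (q5.injective (h.trans h50.symm)) (by decide)
    have n1 : q5 5 ≠ 1 := fun h => absurd (q5.injective (h.trans h51.symm)) (by decide)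
    have n2 : q5 5 ≠ 2 := fun h => absurd (q5.injective (h.trans h52.symm)) (by decide)
    have n3 : q5 5 ≠ 3 := fun h => absurd (q5.injective (h.trans h53.symm)) (by decide)
    have n4 : q5 5 ≠ 4 := fun h => absurd (q5.injective (h.trans h54.symm)) (by decide)
    have v0 : (q5 5).val ≠ 0 := fun h => n0 (Fin.ext h)
    have v1 : (q5 5).val ≠ 1 := by simpa [Fin.ext_iff] using n1
    have v2 : (q5 5).val ≠ 2 := by simpa [Fin.ext_iff] using n2
    have v3 : (q5 5).val ≠ 3 := by simpa [Fin.ext_iff] using n3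
    have v4 : (q5 5).val ≠ 4 := by simpa [Fin.ext_iff] using n4
    have vlt : (q5 5).val < 6 := (q5 5).isLt
    exact Fin.ext (by omega)
  have hq5one : q5 = 1 := by
    apply Equiv.ext
    intro i
    fin_cases i
    · simpa using h50
    · simpa using h51
    · simpa using h52
    · simpa using h53
    · simpa using h54
    · simpa using h55
  have vb : b'.val ≠ 0 := fun h => hb'0 (Fin.ext h)
  have vd0 : d'.val ≠ 0 := fun h => hd'0 (Fin.ext h)
  have vd1 : d'.val ≠ 1 := by simpa [Fin.ext_iff] using hd'1
  have ve0 : e'.val ≠ 0 := fun h => he'0 (Fin.ext h)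
  have ve1 : e'.val ≠ 1 := by simpa [Fin.ext_iff] using he'1
  have ve2 : e'.val ≠ 2 := by simpa [Fin.ext_iff] using he'2
  have vf0 : f'.val ≠ 0 := fun h => hf'0 (Fin.ext h)
  have vf1 : f'.val ≠ 1 := by simpa [Fin.ext_iff] using hf'1
  have vf2 : f'.val ≠ 2 := by simpa [Fin.ext_iff] using hf'2
  have vf3 : f'.val ≠ 3 := by simpa [Fin.ext_iff] using hf'3
  have hbl := b'.isLt; have hdl := d'.isLt; have hel := e'.isLt; have hfl := f'.isLt
  obtain ⟨b, hbs⟩ : ∃ b : Fin 5, Fin.succ b = b' :=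
    ⟨⟨b'.val - 1, by omega⟩, by apply Fin.ext; simp [Fin.val_succ]; omega⟩
  obtain ⟨d, hds⟩ : ∃ d : Fin 4, Fin.succ (Fin.succ d) = d' :=
    ⟨⟨d'.val - 2, by omega⟩, by apply Fin.ext; simp [Fin.val_succ]; omega⟩
  obtain ⟨e, hes⟩ : ∃ e : Fin 3, Fin.succ (Fin.succ (Fin.succ e)) = e' :=
    ⟨⟨e'.val - 3, by omega⟩, by apply Fin.ext; simp [Fin.val_succ]; omega⟩
  obtain ⟨f, hfs⟩ : ∃ f : Fin 2, Fin.succ (Fin.succ (Fin.succ (Fin.succ f))) = f' :=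
    ⟨⟨f'.val - 4, by omega⟩, by apply Fin.ext; simp [Fin.val_succ]; omega⟩
  have e0 : q = Equiv.swap 0 a * q1 := by
    rw [hq1, ← mul_assoc, Equiv.swap_mul_self, one_mul]
  have e1 : q1 = Equiv.swap 1 b' * q2 := by
    rw [hq2, ← mul_assoc, Equiv.swap_mul_self, one_mul]
  have e2 : q2 = Equiv.swap 2 d' * q3 := by
    rw [hq3, ← mul_assoc, Equiv.swap_mul_self, one_mul]
  have e3 : q3 = Equiv.swap 3 e' * q4 := by
    rw [hq4, ← mul_assoc, Equiv.swap_mul_self, one_mul]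
  have e4 : q4 = Equiv.swap 4 f' * q5 := by
    rw [hq5, ← mul_assoc, Equiv.swap_mul_self, one_mul]
  have e4' : q4 = Equiv.swap 4 f' * 1 :=
    e4.trans (congrArg (fun z => Equiv.swap 4 f' * z) hq5one)
  have big : q = Equiv.swap 0 a * (Equiv.swap 1 b' * (Equiv.swap 2 d' *
      (Equiv.swap 3 e' * (Equiv.swap 4 f' * 1)))) :=
    e0.trans (congrArg (fun z => Equiv.swap 0 a * z)
      (e1.trans (congrArg (fun z => Equiv.swap 1 b' * z)
        (e2.trans (congrArg (fun z => Equiv.swap 2 d' * z)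
          (e3.trans (congrArg (fun z => Equiv.swap 3 e' * z) e4')))))))
  refine ⟨a, b, d, e, f, ?_⟩
  show q = F a b d e f
  rw [F, hbs, hds, hes, hfs, big]
  simp [mul_assoc]

private theorem p15 (y : Equiv.Perm (Fin 6)) (h : y ^ 3 = 1 ∨ y ^ 5 = 1) : y ^ 15 = 1 := by
  rcases h with h | h
  · rw [show (15 : ℕ) = 3 * 5 by norm_num, pow_mul, h, one_pow]
  · rw [show (15 : ℕ) = 5 * 3 by norm_num, pow_mul, h, one_pow]

theorem stmt_19 (x₁ x₂ : alternatingGroup (Fin 6))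
    (h₁ : x₁ ^ 30 ≠ 1) (h₂ : x₂ ^ 30 ≠ 1) :
    (x₁ * x₂) ^ 15 = 1 ∨ (x₁ * x₂ ^ 2) ^ 15 = 1 ∨ (x₁ * x₂ ^ 3) ^ 15 = 1 := by
  have hsp : Equiv.Perm.sign (x₁ : Equiv.Perm (Fin 6)) = 1 :=
    Equiv.Perm.mem_alternatingGroup.mp x₁.2
  have hsq : Equiv.Perm.sign (x₂ : Equiv.Perm (Fin 6)) = 1 :=
    Equiv.Perm.mem_alternatingGroup.mp x₂.2
  have hp30 : (x₁ : Equiv.Perm (Fin 6)) ^ 30 ≠ 1 := by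
    intro h
    exact h₁ (Subtype.ext (by rw [SubmonoidClass.coe_pow]; exact h))
  have hq30 : (x₂ : Equiv.Perm (Fin 6)) ^ 30 ≠ 1 := by
    intro h
    exact h₂ (Subtype.ext (by rw [SubmonoidClass.coe_pow]; exact h))
  obtain ⟨a, b, d, e, f, hp⟩ := F_surj (x₁ : Equiv.Perm (Fin 6))
  have het : ET a b d e f := (ETiff a b d e f).mpr (hp ▸ hsp)
  rcases mainL a b d e f with h | h | h | ⟨hconj, -⟩
  · exact absurd het h
  · exfalso
    apply hp30
    have h6 : (x₁ : Equiv.Perm (Fin 6)) ^ 6 = 1 :=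
      pow_eq_one_of_iter _ _ (by rw [hp, coeF]) 6 h
    rw [show (30 : ℕ) = 6 * 5 by norm_num, pow_mul, h6, one_pow]
  · exfalso
    apply hp30
    have h5 : (x₁ : Equiv.Perm (Fin 6)) ^ 5 = 1 :=
      pow_eq_one_of_iter _ _ (by rw [hp, coeF]) 5 h
    rw [show (30 : ℕ) = 5 * 6 by norm_num, pow_mul, h5, one_pow]
  · set Q := fF a b d e f with hQ
    set σ : Equiv.Perm (Fin 6) :=
      F (ggt Q).1 (ggt Q).2.1 (ggt Q).2.2.1 (ggt Q).2.2.2.1 (ggt Q).2.2.2.2 with hσdef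
    have hσcoe : ⇑σ = fgg Q := by
      rw [hσdef]
      unfold fgg
      exact coeF _ _ _ _ _
    have hmul : σ * cc = (x₁ : Equiv.Perm (Fin 6)) * σ := by
      apply Equiv.ext
      intro x
      simp only [Equiv.Perm.mul_apply]
      rw [hσcoe, coec, hp, coeF]
      exact hconj x
    have hσc : σ * cc * σ⁻¹ = (x₁ : Equiv.Perm (Fin 6)) := by
      rw [hmul, mul_inv_cancel_right]
    set q' := σ⁻¹ * (x₂ : Equiv.Perm (Fin 6)) * σ with hq'def
    have hback : σ * q' * σ⁻¹ = (x₂ : Equiv.Perm (Fin 6)) := by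
      rw [hq'def]; group
    have hsq' : Equiv.Perm.sign q' = 1 := by
      rw [hq'def, map_mul, map_mul, map_inv, hsq]
      group
    have hq'30 : q' ^ 30 ≠ 1 := by
      intro h
      apply hq30
      rw [← hback, conj_pow, h, mul_one]
      simp
    have final : ∀ k : ℕ, (cc * q' ^ k) ^ 15 = 1 → (x₁ * x₂ ^ k) ^ 15 = 1 := by
      intro k hk
      have hcoe : ((x₁ * x₂ ^ k : alternatingGroup (Fin 6)) : Equiv.Perm (Fin 6))
          = σ * (cc * q' ^ k) * σ⁻¹ := by
        push_cast
        rw [← hσc, ← hback, conj_pow]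
        group
      apply Subtype.ext
      rw [SubmonoidClass.coe_pow, hcoe, conj_pow, hk, mul_one]
      simp
    obtain ⟨a2, b2, d2, e2, f2, hq2⟩ := F_surj q'
    have het2 : ET a2 b2 d2 e2 f2 := (ETiff a2 b2 d2 e2 f2).mpr (hq2 ▸ hsq')
    have hcoeq' : ⇑q' = fF a2 b2 d2 e2 f2 := by rw [hq2, coeF]
    have hck : ∀ k : ℕ, ⇑(cc * q' ^ k) = fc ∘ (fF a2 b2 d2 e2 f2)^[k] := by
      intro k
      funext x
      simp only [Equiv.Perm.mul_apply, Function.comp_apply]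
      rw [coec, ← hcoeq', Equiv.Perm.iterate_eq_pow]
    rcases mainL a2 b2 d2 e2 f2 with h | h | h | ⟨-, hkey⟩
    · exact absurd het2 h
    · exfalso
      apply hq'30
      have h6 : q' ^ 6 = 1 := pow_eq_one_of_iter _ _ hcoeq' 6 h
      rw [show (30 : ℕ) = 6 * 5 by norm_num, pow_mul, h6, one_pow]
    · exfalso
      apply hq'30
      have h5 : q' ^ 5 = 1 := pow_eq_one_of_iter _ _ hcoeq' 5 h
      rw [show (30 : ℕ) = 5 * 6 by norm_num, pow_mul, h5, one_pow]
    · rcases hkey with h | h | h | h | h | h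
      · exact Or.inl (final 1 (p15 _ (Or.inl (pow_eq_one_of_iter _ _ (hck 1) 3 h))))
      · exact Or.inl (final 1 (p15 _ (Or.inr (pow_eq_one_of_iter _ _ (hck 1) 5 h))))
      · exact Or.inr (Or.inl (final 2 (p15 _ (Or.inl (pow_eq_one_of_iter _ _ (hck 2) 3 h)))))
      · exact Or.inr (Or.inl (final 2 (p15 _ (Or.inr (pow_eq_one_of_iter _ _ (hck 2) 5 h)))))
      · exact Or.inr (Or.inr (final 3 (p15 _ (Or.inl (pow_eq_one_of_iter _ _ (hck 3) 3 h)))))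
      · exact Or.inr (Or.inr (final 3 (p15 _ (Or.inr (pow_eq_one_of_iter _ _ (hck 3) 5 h)))))
end
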